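/- arXiv:math/0010037 — 6 statements merged into one kernel-verified Lean document; each statement's English description precedes it below -/
import Mathlib

section
/- Let W and K be finite-dimensional complex vector spaces, and let H̄ be a linear subspace of codimension at most 1 in Hom(K, W) ≅ W ⊗ K*. Let φ : H̄ → K be a nonzero linear map. Then the linear span in W of the set { A(φ(B)) − B(φ(A)) : A, B ∈ H̄ } (where an element of H̄ ⊆ Hom(K,W) is applied to a vector of K) is a subspace of codimension at most 2 in W; i.e., it contains a codimension-2 subspace of W. -/
/-- linear algebra lemma, [V3] Lemma 3 variant: if `H̄ ⊆ Hom(K, W)` has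
codimension at most 1 and `φ : H̄ → K` is a nonzero linear map, then the span of
`{A(φ(B)) − B(φ(A)) : A, B ∈ H̄}` has codimension at most 2 in `W`. -/
theorem span_brackets_codim_le_two
    (W K : Type*) [AddCommGroup W] [Module ℂ W] [FiniteDimensional ℂ W]
    [AddCommGroup K] [Module ℂ K] [FiniteDimensional ℂ K]
    (Hbar : Submodule ℂ (K →ₗ[ℂ] W))
    (hcodim : Module.finrank ℂ ((K →ₗ[ℂ] W) ⧸ Hbar) ≤ 1)
    (φ : Hbar →ₗ[ℂ] K) (hφ : φ ≠ 0) :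
    Module.finrank ℂ
      (W ⧸ Submodule.span ℂ
        {w : W | ∃ A B : Hbar, w = (A : K →ₗ[ℂ] W) (φ B) - (B : K →ₗ[ℂ] W) (φ A)}) ≤ 2 := by
  set S : Submodule ℂ W := Submodule.span ℂ
      {w : W | ∃ A B : Hbar, w = (A : K →ₗ[ℂ] W) (φ B) - (B : K →ₗ[ℂ] W) (φ A)} with hS
  set N := W ⧸ S
  set π : W →ₗ[ℂ] N := S.mkQ with hπ
  set U : Submodule ℂ K := LinearMap.range φ with hU
  -- the map Ψ : Hom(K,W) → Hom(U,N)
  set Ψ : (K →ₗ[ℂ] W) →ₗ[ℂ] (U →ₗ[ℂ] N) :=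
    { toFun := fun A => π ∘ₗ A ∘ₗ U.subtype
      map_add' := by intro A B; ext u; simp
      map_smul' := by intro c A; ext u; simp } with hΨ
  -- Ψ is surjective
  have hΨsurj : Function.Surjective Ψ := by
    intro g
    obtain ⟨σ, hσ⟩ := π.exists_rightInverse_of_surjective S.range_mkQ
    obtain ⟨E, hE⟩ := LinearMap.exists_extend (σ ∘ₗ g)
    refine ⟨E, ?_⟩
    ext u
    have h1 : (E ∘ₗ U.subtype) u = (σ ∘ₗ g) u := by rw [hE]
    have h2 : (π ∘ₗ σ) (g u) = (LinearMap.id : N →ₗ[ℂ] N) (g u) := by rw [hσ]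
    simp only [hΨ, LinearMap.coe_mk, AddHom.coe_mk, LinearMap.comp_apply] at h1 h2 ⊢
    rw [h1]; exact h2
  -- ker φ maps into ker Ψ
  have hker : (LinearMap.ker φ).map Hbar.subtype ≤ LinearMap.ker Ψ := by
    rintro _ ⟨A, hA, rfl⟩
    rw [LinearMap.mem_ker]
    ext u
    obtain ⟨B, hB⟩ := u.2
    have hmem : (A : K →ₗ[ℂ] W) (φ B) - (B : K →ₗ[ℂ] W) (φ A) ∈ S :=
      Submodule.subset_span ⟨A, B, rfl⟩
    have hA' : φ A = 0 := hA
    rw [hA'] at hmem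
    simp only [map_zero, sub_zero] at hmem
    simp only [hΨ, LinearMap.coe_mk, AddHom.coe_mk, LinearMap.comp_apply,
      Submodule.coe_subtype, LinearMap.zero_apply, hπ]
    rw [← hB]
    rw [Submodule.mkQ_apply, Submodule.Quotient.mk_eq_zero]; exact hmem
  -- dimension bookkeeping
  have hd : Module.finrank ℂ ((K →ₗ[ℂ] W) ⧸ Hbar) + Module.finrank ℂ Hbar
      = Module.finrank ℂ (K →ₗ[ℂ] W) := Submodule.finrank_quotient_add_finrank Hbar
  have hφrk : Module.finrank ℂ (LinearMap.range φ) + Module.finrank ℂ (LinearMap.ker φ)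
      = Module.finrank ℂ Hbar := LinearMap.finrank_range_add_finrank_ker φ
  have hΨrk : Module.finrank ℂ (LinearMap.range Ψ) + Module.finrank ℂ (LinearMap.ker Ψ)
      = Module.finrank ℂ (K →ₗ[ℂ] W) := LinearMap.finrank_range_add_finrank_ker Ψ
  have hΨrange : Module.finrank ℂ (LinearMap.range Ψ)
      = Module.finrank ℂ U * Module.finrank ℂ N := by
    rw [LinearMap.range_eq_top.2 hΨsurj, finrank_top, Module.finrank_linearMap]
  have hkerle : Module.finrank ℂ (LinearMap.ker φ) ≤ Module.finrank ℂ (LinearMap.ker Ψ) := by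
    rw [← Submodule.finrank_map_subtype_eq Hbar (LinearMap.ker φ)]
    exact Submodule.finrank_mono hker
  have hrpos : 1 ≤ Module.finrank ℂ U := by
    rw [Nat.one_le_iff_ne_zero]
    intro h
    exact hφ (LinearMap.range_eq_bot.1 (Submodule.finrank_eq_zero.1 h))
  set r := Module.finrank ℂ U
  set n := Module.finrank ℂ N
  have key : r * n ≤ r + 1 := by omega
  nlinarith
end

section
/- Let n ≥ 2 and d ≥ 1. For every 2-dimensional linear subspace V ⊆ ℂ^{n+1} with basis (v, w) and every F ∈ S^d vanishing identically on V, there exist finitely many homogeneous polynomials F_1, …, F_m of degree d and alternating bilinear forms ω_1, …, ω_m on ℂ^{n+1} such that: (a) for all v', w' ∈ ℂ^{n+1} and all s, t ∈ ℂ one has Σ_{i=1}^m ω_i(v', w') · F_i(s·v' + t·w') = 0; and (b) Σ_{i=1}^m ω_i(v, w) · F_i = F in S^d. (This expresses that the bundle M^d_G ⊗ O_G(1) on the Grassmannian G of lines in ℙ^n is generated by its global sections, where M^d_G is the kernel of the evaluation S^d ⊗ O_G → E_d, whose fiber at a line ℓ = ℙ(V) is I_V(d), and O_G(1) is the Plücker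 polarization with H^0(O_G(1)) = Λ²(ℂ^{n+1})*.) -/
open MvPolynomial

noncomputable section GGaux

variable {N : ℕ}

/-- The linear polynomial associated to a covector. -/
noncomputable def linPoly (α : (Fin N → ℂ) →ₗ[ℂ] ℂ) : MvPolynomial (Fin N) ℂ :=
  ∑ i, C (α (Pi.single i 1)) * X i

lemma linPoly_isHomogeneous (α : (Fin N → ℂ) →ₗ[ℂ] ℂ) :
    (linPoly α).IsHomogeneous 1 :=
  IsHomogeneous.sum _ _ _ fun i _ => isHomogeneous_C_mul_X _ i

lemma eval_linPoly (α : (Fin N → ℂ) →ₗ[ℂ] ℂ) (x : Fin N → ℂ) :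
    eval x (linPoly α) = α x := by
  have hx : x = ∑ i, x i • (Pi.single i (1 : ℂ) : Fin N → ℂ) := by
    funext j
    simp [Finset.sum_apply, Pi.single_apply]
  conv_rhs => rw [hx]
  rw [map_sum, linPoly, map_sum]
  refine Finset.sum_congr rfl fun i _ => ?_
  simp [mul_comm]

/-- The alternating bilinear form `x, y ↦ α x * β y - α y * β x`. -/
noncomputable def wedge (α β : (Fin N → ℂ) →ₗ[ℂ] ℂ) :
    (Fin N → ℂ) →ₗ[ℂ] (Fin N → ℂ) →ₗ[ℂ] ℂ :=
  α.smulRight β - β.smulRight α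

lemma wedge_apply (α β : (Fin N → ℂ) →ₗ[ℂ] ℂ) (x y : Fin N → ℂ) :
    wedge α β x y = α x * β y - α y * β x := by
  simp [wedge, smul_eq_mul]
  ring

lemma homogeneousComponent_mul_isHomogeneous_one
    (d : ℕ) (hd : 1 ≤ d) (p q : MvPolynomial (Fin N) ℂ) (hq : q.IsHomogeneous 1) :
    homogeneousComponent d (p * q) = homogeneousComponent (d - 1) p * q := by
  conv_lhs => rw [← sum_homogeneousComponent p]
  rw [Finset.sum_mul, map_sum]
  have hterm : ∀ e, homogeneousComponent d (homogeneousComponent e p * q)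
      = if d = e + 1 then homogeneousComponent e p * q else 0 := fun e =>
    homogeneousComponent_of_mem
      ((mem_homogeneousSubmodule _ _).mpr
        ((homogeneousComponent_isHomogeneous e p).mul hq))
  have hcong : ∀ e ∈ Finset.range (p.totalDegree + 1),
      homogeneousComponent d (homogeneousComponent e p * q)
        = if e = d - 1 then homogeneousComponent e p * q else 0 := by
    intro e _
    rw [hterm e]
    have : (d = e + 1) ↔ (e = d - 1) := by omega
    by_cases h : e = d - 1
    · rw [if_pos h, if_pos (this.mpr h)]
    · rw [if_neg h, if_neg (fun hh => h (this.mp hh))]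
  rw [Finset.sum_congr rfl hcong, Finset.sum_ite_eq' (Finset.range _) (d - 1)]
  by_cases hcase : d - 1 ∈ Finset.range (p.totalDegree + 1)
  · rw [if_pos hcase]
  · rw [if_neg hcase]
    have htd : p.totalDegree < d - 1 := by
      simp only [Finset.mem_range] at hcase; omega
    rw [homogeneousComponent_eq_zero _ _ htd, zero_mul]

/-- Decomposition of a homogeneous form vanishing on the plane spanned by `v, w`
as a combination of linear forms vanishing on that plane. -/
lemma exists_decomp (d : ℕ) (hd : 1 ≤ d) (v w : Fin N → ℂ)
    (β γ : (Fin N → ℂ) →ₗ[ℂ] ℂ)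
    (F : MvPolynomial (Fin N) ℂ) (hF : F.IsHomogeneous d)
    (hFV : ∀ s t : ℂ, eval (s • v + t • w) F = 0) :
    ∃ G : Fin N → MvPolynomial (Fin N) ℂ,
      (∀ j, (G j).IsHomogeneous (d - 1)) ∧
      ∑ j, (X j - (C (v j) * linPoly β + C (w j) * linPoly γ)) * G j = F := by
  set A : Fin N → MvPolynomial (Fin N) ℂ :=
    fun j => C (v j) * linPoly β + C (w j) * linPoly γ with hA
  set q : Fin N → MvPolynomial (Fin N) ℂ := fun j => X j - A j with hq
  have hq1 : ∀ j, (q j).IsHomogeneous 1 := by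
    intro j
    rw [← mem_homogeneousSubmodule]
    refine Submodule.sub_mem _ ?_ (Submodule.add_mem _ ?_ ?_)
    · exact (mem_homogeneousSubmodule _ _).mpr (isHomogeneous_X _ _)
    · exact (mem_homogeneousSubmodule _ _).mpr ((linPoly_isHomogeneous β).C_mul _)
    · exact (mem_homogeneousSubmodule _ _).mpr ((linPoly_isHomogeneous γ).C_mul _)
  -- substitution of the projection onto the plane kills F
  have hAF : aeval A F = 0 := by
    apply MvPolynomial.funext
    intro x
    have h1 : eval x (aeval A F) = eval (fun j => eval x (A j)) F := by
      rw [aeval_def, algebraMap_eq, ← eval_assoc]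
      rfl
    rw [h1, map_zero]
    have h2 : (fun j => eval x (A j)) = β x • v + γ x • w := by
      funext j
      simp [hA, eval_linPoly, mul_comm]
    rw [h2]
    exact hFV _ _
  -- F lies in the ideal generated by the q j
  have hFmem : F ∈ Ideal.span (Set.range q) := by
    set I : Ideal (MvPolynomial (Fin N) ℂ) := Ideal.span (Set.range q) with hI
    have h1 : (Ideal.Quotient.mkₐ ℂ I).comp (aeval X)
        = (Ideal.Quotient.mkₐ ℂ I).comp (aeval A) := by
      apply MvPolynomial.algHom_ext
      intro j
      simp only [AlgHom.comp_apply, aeval_X, Ideal.Quotient.mkₐ_eq_mk]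
      rw [Ideal.Quotient.mk_eq_mk_iff_sub_mem]
      exact Ideal.subset_span (Set.mem_range_self j)
    have h2 := DFunLike.congr_fun h1 F
    simp only [AlgHom.comp_apply, aeval_X_left_apply, Ideal.Quotient.mkₐ_eq_mk, hAF,
      map_zero] at h2
    exact (Ideal.Quotient.eq_zero_iff_mem).mp h2
  rw [Ideal.span, Submodule.mem_span_range_iff_exists_fun] at hFmem
  obtain ⟨c, hc⟩ := hFmem
  refine ⟨fun j => homogeneousComponent (d - 1) (c j), fun j =>
    homogeneousComponent_isHomogeneous _ _, ?_⟩
  have hFc : homogeneousComponent d F = F := by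
    rw [homogeneousComponent_of_mem ((mem_homogeneousSubmodule _ _).mpr hF)]
    simp
  conv_rhs => rw [← hFc, ← hc]
  rw [map_sum]
  refine Finset.sum_congr rfl fun j _ => ?_
  rw [smul_eq_mul, homogeneousComponent_mul_isHomogeneous_one d hd (c j) (q j) (hq1 j)]
  ring

end GGaux

/-- global generation of `M^d_G ⊗ O_G(1)` on the Grassmannian of lines.
For a 2-plane `V ⊆ ℂ^{n+1}` with basis `(v, w)` and a degree-`d` form `F` vanishing on `V`,
there are degree-`d` forms `F_i` and alternating bilinear forms `ω_i` such that
`Σ ω_i(v', w') F_i(s v' + t w') = 0` for all `v', w', s, t`, and `Σ ω_i(v, w) • F_i = F`. -/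
theorem grassmannian_kernel_bundle_twist_one_globally_generated
    (n d : ℕ) (hn : 2 ≤ n) (hd : 1 ≤ d)
    (V : Submodule ℂ (Fin (n + 1) → ℂ)) (hV : Module.finrank ℂ V = 2)
    (v w : Fin (n + 1) → ℂ) (hvV : v ∈ V) (hwV : w ∈ V)
    (hvw : LinearIndependent ℂ ![v, w])
    (hspan : Submodule.span ℂ {v, w} = V)
    (F : MvPolynomial (Fin (n + 1)) ℂ) (hF : F.IsHomogeneous d)
    (hFV : ∀ u ∈ V, MvPolynomial.eval u F = 0) :
    ∃ (m : ℕ) (Fi : Fin m → MvPolynomial (Fin (n + 1)) ℂ)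
      (ω : Fin m → (Fin (n + 1) → ℂ) →ₗ[ℂ] (Fin (n + 1) → ℂ) →ₗ[ℂ] ℂ),
      (∀ i, (Fi i).IsHomogeneous d) ∧
      (∀ i, ∀ u : Fin (n + 1) → ℂ, ω i u u = 0) ∧
      (∀ (v' w' : Fin (n + 1) → ℂ) (s t : ℂ),
        ∑ i, ω i v' w' * MvPolynomial.eval (s • v' + t • w') (Fi i) = 0) ∧
      (∑ i, (ω i v w) • Fi i = F) := by
  classical
  -- construct dual covectors β γ with β v = 1, β w = 0, γ v = 0, γ w = 1
  set f : (Fin 2 → ℂ) →ₗ[ℂ] (Fin (n + 1) → ℂ) :=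
    Fintype.linearCombination ℂ ![v, w] with hf
  have hker : LinearMap.ker f = ⊥ := by
    rw [LinearMap.ker_eq_bot']
    intro c hc
    have := Fintype.linearIndependent_iff.mp hvw c
    rw [hf] at hc
    rw [Fintype.linearCombination_apply] at hc
    funext i
    exact this hc i
  obtain ⟨g, hg⟩ := f.exists_leftInverse_of_injective hker
  have hgf : ∀ x, g (f x) = x := fun x => DFunLike.congr_fun hg x
  have hfv : f (Pi.single 0 1) = v := by
    rw [hf, Fintype.linearCombination_apply_single]
    simp
  have hfw : f (Pi.single 1 1) = w := by
    rw [hf, Fintype.linearCombination_apply_single]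
    simp
  set β : (Fin (n + 1) → ℂ) →ₗ[ℂ] ℂ := (LinearMap.proj 0).comp g with hβ
  set γ : (Fin (n + 1) → ℂ) →ₗ[ℂ] ℂ := (LinearMap.proj 1).comp g with hγ
  have hβv : β v = 1 := by rw [hβ, ← hfv]; simp [hgf]
  have hβw : β w = 0 := by rw [hβ, ← hfw]; simp [hgf]
  have hγv : γ v = 0 := by rw [hγ, ← hfv]; simp [hgf]
  have hγw : γ w = 1 := by rw [hγ, ← hfw]; simp [hgf]
  -- linear forms vanishing on V
  set αl : Fin (n + 1) → ((Fin (n + 1) → ℂ) →ₗ[ℂ] ℂ) :=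
    fun j => LinearMap.proj j - v j • β - w j • γ with hαl
  -- decomposition of F
  obtain ⟨G, hGhom, hGsum⟩ := exists_decomp d hd v w β γ F hF (by
    intro s t
    exact hFV _ (V.add_mem (V.smul_mem s hvV) (V.smul_mem t hwV)))
  set qp : Fin (n + 1) → MvPolynomial (Fin (n + 1)) ℂ :=
    fun j => X j - (C (v j) * linPoly β + C (w j) * linPoly γ) with hqp
  have heval_qp : ∀ (x : Fin (n + 1) → ℂ) j, eval x (qp j) = αl j x := by
    intro x j
    simp [hqp, hαl, eval_linPoly, smul_eq_mul]
    ring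
  have hqp1 : ∀ j, (qp j).IsHomogeneous 1 := by
    intro j
    rw [← mem_homogeneousSubmodule]
    refine Submodule.sub_mem _ ?_ (Submodule.add_mem _ ?_ ?_)
    · exact (mem_homogeneousSubmodule _ _).mpr (isHomogeneous_X _ _)
    · exact (mem_homogeneousSubmodule _ _).mpr ((linPoly_isHomogeneous β).C_mul _)
    · exact (mem_homogeneousSubmodule _ _).mpr ((linPoly_isHomogeneous γ).C_mul _)
  have hαlv : ∀ j, αl j v = 0 := by
    intro j; simp [hαl, hβv, hγv]
  have hαlw : ∀ j, αl j w = 0 := by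
    intro j; simp [hαl, hβw, hγw]
  -- the families of polynomials and forms, indexed by Fin (n+1) × Fin 3
  set FiP : Fin (n + 1) × Fin 3 → MvPolynomial (Fin (n + 1)) ℂ :=
    fun p => ![linPoly γ * G p.1, linPoly β * G p.1, qp p.1 * G p.1] p.2 with hFiP
  set ωP : Fin (n + 1) × Fin 3 → ((Fin (n + 1) → ℂ) →ₗ[ℂ] (Fin (n + 1) → ℂ) →ₗ[ℂ] ℂ) :=
    fun p => ![wedge (αl p.1) β, wedge γ (αl p.1), wedge β γ] p.2 with hωP
  set e : (Fin (n + 1) × Fin 3) ≃ Fin ((n + 1) * 3) := finProdFinEquiv with he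
  refine ⟨(n + 1) * 3, FiP ∘ e.symm, ωP ∘ e.symm, ?_, ?_, ?_, ?_⟩
  · -- homogeneity
    intro i
    rcases hpk : e.symm i with ⟨j, k⟩
    simp only [Function.comp_apply, hpk]
    have h1d : 1 + (d - 1) = d := by omega
    fin_cases k
    · simpa [hFiP, h1d] using
        (h1d ▸ (linPoly_isHomogeneous γ).mul (hGhom j))
    · simpa [hFiP, h1d] using
        (h1d ▸ (linPoly_isHomogeneous β).mul (hGhom j))
    · simpa [hFiP, h1d] using
        (h1d ▸ (hqp1 j).mul (hGhom j))
  · -- alternating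
    intro i u
    rcases hpk : e.symm i with ⟨j, k⟩
    simp only [Function.comp_apply, hpk]
    fin_cases k <;> simp [hωP, wedge_apply] <;> ring
  · -- vanishing on the moving line
    intro v' w' s t
    rw [← Equiv.sum_comp e
      (fun i => (ωP ∘ e.symm) i v' w' * eval (s • v' + t • w') ((FiP ∘ e.symm) i))]
    simp only [Function.comp_apply, Equiv.symm_apply_apply]
    rw [Fintype.sum_prod_type]
    apply Finset.sum_eq_zero
    intro j _
    rw [Fin.sum_univ_three]
    have hu : ∀ (α : (Fin (n + 1) → ℂ) →ₗ[ℂ] ℂ),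
        α (s • v' + t • w') = s * α v' + t * α w' := by
      intro α; simp
    simp only [hωP, hFiP, Matrix.cons_val_zero, Matrix.cons_val_one, Matrix.head_cons,
      Matrix.cons_val_two, Matrix.tail_cons, map_mul, wedge_apply]
    rw [eval_linPoly, eval_linPoly, heval_qp, hu β, hu γ, hu (αl j)]
    ring
  · -- hitting F at (v, w)
    rw [← Equiv.sum_comp e (fun i => ((ωP ∘ e.symm) i v w) • (FiP ∘ e.symm) i)]
    simp only [Function.comp_apply, Equiv.symm_apply_apply]
    rw [Fintype.sum_prod_type]
    have hinner : ∀ j, (∑ k : Fin 3, (ωP (j, k) v w) • FiP (j, k)) = qp j * G j := by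
      intro j
      rw [Fin.sum_univ_three]
      simp only [hωP, hFiP, Matrix.cons_val_zero, Matrix.cons_val_one, Matrix.head_cons,
        Matrix.cons_val_two, Matrix.tail_cons, wedge_apply]
      rw [hαlv, hαlw, hβv, hβw, hγv, hγw]
      simp
    rw [Finset.sum_congr rfl fun j _ => hinner j]
    exact hGsum
end

section
/- Let n ≥ 6, let k be an integer with 1 ≤ k ≤ n−5, and set d = 2n−2−k. Fix a nonzero x ∈ ℂ^{n+1}. Let T ⊆ S^d_x be a linear subspace of codimension 4 in S^d_x such that, for all homogeneous polynomials P, Q of degree d−1 and all linear forms A_1, A_2, B_1, B_2 vanishing at x, the images of P·A_1, P·A_2, Q·B_1, Q·B_2 in the 4-dimensional quotient S^d_x / T are linearly dependent (this is the condition that T lies in the base locus of H^0(Λ⁴ M^d_{ℙ^n}(2))). Then there exists a 2-dimensional linear subspace V ⊆ ℂ^{n+1} containing x such that T ∩ I_V(d) has codimension at most 1 in I_V(d); i.e., T contains a hyperplane of the degree-d part of the ideal of a line through x. -/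
open MvPolynomial

/-- The codimension of `A ⊓ B` inside `B`, i.e. `dim (B / (A ∩ B))`. -/
noncomputable def relCodim {M : Type*} [AddCommGroup M] [Module ℂ M]
    (A B : Submodule ℂ M) : ℕ :=
  Module.finrank ℂ (↥B ⧸ (A ⊓ B).comap B.subtype)

/-- `S^d_x`: the degree-`d` forms in `n+1` variables vanishing at `x`. -/
noncomputable def SdxSubmodule (n d : ℕ) (x : Fin (n + 1) → ℂ) :
    Submodule ℂ (MvPolynomial (Fin (n + 1)) ℂ) :=
  MvPolynomial.homogeneousSubmodule (Fin (n + 1)) ℂ d ⊓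
    LinearMap.ker (MvPolynomial.aeval (R := ℂ) x).toLinearMap

/-- `I_V(d)`: the degree-`d` forms vanishing identically on the 2-plane `V`. -/
noncomputable def IVSubmodule (n d : ℕ) (V : Submodule ℂ (Fin (n + 1) → ℂ)) :
    Submodule ℂ (MvPolynomial (Fin (n + 1)) ℂ) :=
  MvPolynomial.homogeneousSubmodule (Fin (n + 1)) ℂ d ⊓
    ⨅ u ∈ V, LinearMap.ker (MvPolynomial.aeval (R := ℂ) u).toLinearMap

set_option linter.unusedSectionVars false
set_option linter.unusedVariables false

set_option synthInstance.maxHeartbeats 400000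
set_option maxHeartbeats 1600000

open Module Submodule


open Module Submodule

section LA
variable {W : Type*} [AddCommGroup W] [Module ℂ W]

lemma li_pair_of_not_mem_span {u w : W} (hu : u ≠ 0) (hw : w ∉ Submodule.span ℂ {u}) :
    LinearIndependent ℂ ![u, w] := by
  rw [linearIndependent_fin2]
  simp only [Matrix.cons_val_one, Matrix.head_cons, Matrix.cons_val_zero]
  refine ⟨fun h => hw (by rw [h]; exact Submodule.zero_mem _), fun a h => ?_⟩
  have ha : a ≠ 0 := fun h0 => hu (by rw [h0, zero_smul] at h; exact h.symm)
  exact hw (Submodule.mem_span_singleton.2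
    ⟨a⁻¹, by rw [← h, smul_smul, inv_mul_cancel₀ ha, one_smul]⟩)

lemma li_pair_of_mem_not_mem {M : Submodule ℂ W} {u w : W} (hu : u ∈ M) (hu0 : u ≠ 0)
    (hw : w ∉ M) : LinearIndependent ℂ ![u, w] :=
  li_pair_of_not_mem_span hu0 (fun h => hw ((Submodule.span_singleton_le_iff_mem u M).2 hu h))

variable [FiniteDimensional ℂ W]

lemma two_le_finrank_of_pair {S : Submodule ℂ W} {u w : W}
    (hu : u ∈ S) (hw : w ∈ S) (h : LinearIndependent ℂ ![u, w]) : 2 ≤ finrank ℂ S := by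
  have hsub : Set.range ![u, w] ⊆ (S : Set W) := by
    rw [Set.range_subset_iff]; intro i; fin_cases i <;> assumption
  have h1 : Submodule.span ℂ (Set.range ![u, w]) ≤ S := Submodule.span_le.2 hsub
  have h2 := finrank_span_eq_card h
  have h3 := Submodule.finrank_mono h1
  simp at h2; omega

lemma exists_pair_of_two_le_finrank {S : Submodule ℂ W}
    (h : 2 ≤ finrank ℂ S) : ∃ u w : W, u ∈ S ∧ w ∈ S ∧ LinearIndependent ℂ ![u, w] := by
  have b := Module.finBasis ℂ ↥S
  set r := finrank ℂ ↥S with hr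
  have hr2 : 2 ≤ r := h
  let i0 : Fin r := ⟨0, by omega⟩
  let i1 : Fin r := ⟨1, by omega⟩
  have hli : LinearIndependent ℂ (fun i => ((b i : W))) := by
    have := b.linearIndependent.map' S.subtype (Submodule.ker_subtype S)
    exact this
  have hne : i0 ≠ i1 := by simp [i0, i1, Fin.ext_iff]
  have hinj : Function.Injective ![i0, i1] := by
    intro a c hac
    fin_cases a <;> fin_cases c <;> simp_all
  refine ⟨b i0, b i1, (b i0).2, (b i1).2, ?_⟩
  have := hli.comp ![i0, i1] hinj
  have heq : ((fun i => ((b i : W))) ∘ ![i0, i1]) = ![(b i0 : W), (b i1 : W)] := by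
    ext j; fin_cases j <;> rfl
  rwa [heq] at this

lemma finrank_map_mkQ_add (Z S : Submodule ℂ W) :
    finrank ℂ (S.map Z.mkQ) + finrank ℂ (Z ⊓ S : Submodule ℂ W) = finrank ℂ S := by
  set f := Z.mkQ.comp S.subtype with hf
  have hrange : LinearMap.range f = S.map Z.mkQ := by
    rw [hf, LinearMap.range_comp, Submodule.range_subtype]
  have hker : LinearMap.ker f = Submodule.comap S.subtype (Z ⊓ S) := by
    rw [hf, LinearMap.ker_comp, Submodule.ker_mkQ]
    ext ⟨v, hv⟩; simp [hv]
  have e := Submodule.comapSubtypeEquivOfLe (inf_le_right : Z ⊓ S ≤ S)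
  have h1 := LinearMap.finrank_range_add_finrank_ker f
  rw [hrange, hker] at h1
  rw [← h1, e.finrank_eq]

lemma exists_mem_ne_zero_of_one_le_finrank {S : Submodule ℂ W}
    (h : 1 ≤ finrank ℂ S) : ∃ v, v ∈ S ∧ v ≠ 0 := by
  have : S ≠ ⊥ := by
    intro hbot
    rw [hbot] at h; simp [finrank_bot] at h
  obtain ⟨v, hv, hv0⟩ := (Submodule.ne_bot_iff S).1 this
  exact ⟨v, hv, hv0⟩

lemma finrank_span_singleton_le' (v : W) : finrank ℂ (Submodule.span ℂ {v}) ≤ 1 := by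
  by_cases hv : v = 0
  · subst hv; rw [Submodule.span_zero_singleton]; simp
  · rw [finrank_span_singleton hv]

lemma funct_factor {V : Type*} [AddCommGroup V] [Module ℂ V] {l0 l1 : V →ₗ[ℂ] ℂ}
    (h : ∀ a, l0 a = 0 → l1 a = 0) : ∃ c : ℂ, l1 = c • l0 := by
  by_cases hl0 : l0 = 0
  · refine ⟨0, ?_⟩
    ext a
    have : l1 a = 0 := h a (by rw [hl0]; rfl)
    simp [this]
  · have : ∃ a0, l0 a0 ≠ 0 := by
      by_contra hc; push_neg at hc; exact hl0 (by ext a; simp [hc a])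
    obtain ⟨a0, ha0⟩ := this
    refine ⟨l1 a0 / l0 a0, ?_⟩
    ext a
    have hker : l0 (a - (l0 a / l0 a0) • a0) = 0 := by
      simp [map_sub, map_smul, smul_eq_mul]
      field_simp; ring
    have := h _ hker
    rw [map_sub, map_smul] at this
    have h2 : l1 a = (l0 a / l0 a0) * l1 a0 := by
      have := sub_eq_zero.1 this
      simpa [smul_eq_mul] using this
    simp [h2, smul_eq_mul]
    field_simp

lemma rank_le_one_rep {V : Type*} [AddCommGroup V] [Module ℂ V]
    (C : V →ₗ[ℂ] W) (h : finrank ℂ (LinearMap.range C) ≤ 1) :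
    ∃ (v : W) (l : V →ₗ[ℂ] ℂ), ∀ a, C a = l a • v := by
  have hp : (LinearMap.range C).IsPrincipal := (finrank_le_one_iff_isPrincipal _).1 h
  obtain ⟨v, hv⟩ : ∃ v, LinearMap.range C = Submodule.span ℂ {v} := hp.principal
  by_cases hv0 : v = 0
  · refine ⟨0, 0, fun a => ?_⟩
    have : C a ∈ LinearMap.range C := LinearMap.mem_range_self C a
    rw [hv, hv0, Submodule.span_zero_singleton] at this
    simpa using this
  · set e := LinearEquiv.toSpanNonzeroSingleton ℂ W v hv0 with he
    have hmem : ∀ a, C a ∈ Submodule.span ℂ {v} := fun a => hv ▸ LinearMap.mem_range_self C a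
    set Cres := C.codRestrict (Submodule.span ℂ {v}) hmem with hCres
    refine ⟨v, e.symm.toLinearMap.comp Cres, fun a => ?_⟩
    have h1 : e (e.symm (Cres a)) = Cres a := e.apply_symm_apply _
    have h2 : ∀ c : ℂ, ((e c : Submodule.span ℂ {v}) : W) = c • v := by
      intro c; rfl
    have := congrArg (Subtype.val) h1
    rw [h2] at this
    simpa [hCres] using this.symm

end LA

section LA2
variable {W : Type*} [AddCommGroup W] [Module ℂ W] [FiniteDimensional ℂ W]

lemma smul_mem_span_singleton {v w : W} (h : w ∈ Submodule.span ℂ {v}) (c : ℂ) :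
    c • w ∈ Submodule.span ℂ {v} := Submodule.smul_mem _ c h

lemma pair_kernel_prop {V : Type*} [AddCommGroup V] [Module ℂ V]
    {D0 D1 : V →ₗ[ℂ] W} {v0 v1 : W} {l0 l1 : V →ₗ[ℂ] ℂ}
    (r0 : ∀ a, D0 a = l0 a • v0) (r1 : ∀ a, D1 a = l1 a • v1)
    (hl0 : l0 ≠ 0) (hv0 : v0 ≠ 0) (hv1 : v1 ∉ Submodule.span ℂ {v0})
    (hsum : finrank ℂ (LinearMap.range (D0 + D1)) ≤ 1) :
    ∃ c : ℂ, l1 = c • l0 := by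
  by_cases hker : ∀ a, l0 a = 0 → l1 a = 0
  · exact funct_factor hker
  push_neg at hker
  obtain ⟨b, hb0, hb1⟩ := hker
  by_cases hker' : ∀ a, l1 a = 0 → l0 a = 0
  · obtain ⟨c', hc'⟩ := funct_factor hker'
    have hc'0 : c' ≠ 0 := by
      rintro rfl; rw [zero_smul] at hc'; exact hl0 hc'
    refine ⟨c'⁻¹, ?_⟩
    rw [hc', smul_smul, inv_mul_cancel₀ hc'0, one_smul]
  push_neg at hker'
  obtain ⟨a, ha1, ha0⟩ := hker'
  exfalso
  obtain ⟨v2, l2, r2⟩ := rank_le_one_rep (D0 + D1) hsum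
  have hua : (D0 + D1) a = l0 a • v0 := by
    rw [LinearMap.add_apply, r0, r1, ha1, zero_smul, add_zero]
  have hub : (D0 + D1) b = l1 b • v1 := by
    rw [LinearMap.add_apply, r0, r1, hb0, zero_smul, zero_add]
  have h2a : l2 a • v2 = l0 a • v0 := by rw [← r2, hua]
  have h2b : l2 b • v2 = l1 b • v1 := by rw [← r2, hub]
  have hl2a : l2 a ≠ 0 := by
    intro h
    rw [h, zero_smul] at h2a
    rcases smul_eq_zero.1 h2a.symm with h' | h'
    · exact ha0 h'
    · exact hv0 h'
  have hv2mem : v2 ∈ Submodule.span ℂ {v0} := by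
    refine Submodule.mem_span_singleton.2 ⟨(l2 a)⁻¹ * l0 a, ?_⟩
    rw [mul_smul, ← h2a, smul_smul, inv_mul_cancel₀ hl2a, one_smul]
  have hv1mem : v1 ∈ Submodule.span ℂ {v2} := by
    refine Submodule.mem_span_singleton.2 ⟨(l1 b)⁻¹ * l2 b, ?_⟩
    rw [mul_smul, h2b, smul_smul, inv_mul_cancel₀ hb1, one_smul]
  exact hv1 ((Submodule.span_singleton_le_iff_mem v2 _).2 hv2mem hv1mem)

lemma rank_one_family {V1 V2 : Type*} [AddCommGroup V1] [Module ℂ V1]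
    [AddCommGroup V2] [Module ℂ V2] (C : V1 →ₗ[ℂ] V2 →ₗ[ℂ] W)
    (h1 : ∀ p, finrank ℂ (LinearMap.range (C p)) ≤ 1) :
    (∃ v : W, ∀ p a, C p a ∈ Submodule.span ℂ {v}) ∨
    (∃ l : V2 →ₗ[ℂ] ℂ, l ≠ 0 ∧ ∀ p a, l a = 0 → C p a = 0) := by
  by_cases hex : ∃ p0 a0, C p0 a0 ≠ 0
  swap
  · push_neg at hex
    exact Or.inl ⟨0, fun p a => by rw [hex p a]; exact Submodule.zero_mem _⟩
  obtain ⟨p0, a00, h00⟩ := hex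
  obtain ⟨v0, l0, r0⟩ := rank_le_one_rep (C p0) (h1 p0)
  have hv0 : v0 ≠ 0 := by
    intro h; exact h00 (by rw [r0, h, smul_zero])
  have hl0 : l0 ≠ 0 := by
    intro h; exact h00 (by rw [r0, h, LinearMap.zero_apply, zero_smul])
  by_cases hcom : ∀ p a, C p a ∈ Submodule.span ℂ {v0}
  · exact Or.inl ⟨v0, hcom⟩
  push_neg at hcom
  obtain ⟨q0, b0, hq0⟩ := hcom
  obtain ⟨v1, l1, r1⟩ := rank_le_one_rep (C q0) (h1 q0)
  have hv1 : v1 ∉ Submodule.span ℂ {v0} := by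
    intro h; exact hq0 (by rw [r1]; exact smul_mem_span_singleton h _)
  have hrsum : ∀ p q : V1, finrank ℂ (LinearMap.range ((C p) + (C q))) ≤ 1 := by
    intro p q
    have : (C p) + (C q) = C (p + q) := by rw [map_add]
    rw [this]; exact h1 _
  -- l1 = c0 • l0
  obtain ⟨c0, hc0⟩ := pair_kernel_prop r0 r1 hl0 hv0 hv1 (hrsum p0 q0)
  have hl1b0 : l1 b0 ≠ 0 := by
    intro h
    exact hq0 (by rw [r1 b0, h, zero_smul]; exact Submodule.zero_mem _)
  have hl1 : l1 ≠ 0 := fun h => hl1b0 (by rw [h]; rfl)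
  have hc00 : c0 ≠ 0 := by
    rintro rfl; rw [zero_smul] at hc0; exact hl1 hc0
  refine Or.inr ⟨l0, hl0, fun p a ha => ?_⟩
  obtain ⟨vp, lp, rp⟩ := rank_le_one_rep (C p) (h1 p)
  by_cases hp0 : ∀ a', C p a' ∈ Submodule.span ℂ {v0}
  · -- all values of C p lie in span v0
    by_cases hlp : lp = 0
    · rw [rp, hlp, LinearMap.zero_apply, zero_smul]
    by_cases hvp : vp = 0
    · rw [rp, hvp, smul_zero]
    have hexa : ∃ a1, lp a1 ≠ 0 := by
      by_contra hc; push_neg at hc; exact hlp (by ext a'; simp [hc a'])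
    obtain ⟨a1, ha1⟩ := hexa
    have hvpmem : vp ∈ Submodule.span ℂ {v0} := by
      have := hp0 a1
      rw [rp] at this
      have := smul_mem_span_singleton this (lp a1)⁻¹
      rwa [smul_smul, inv_mul_cancel₀ ha1, one_smul] at this
    have hv1p : v1 ∉ Submodule.span ℂ {vp} := by
      intro h
      exact hv1 ((Submodule.span_singleton_le_iff_mem vp _).2 hvpmem h)
    obtain ⟨c1, hc1⟩ := pair_kernel_prop rp r1 hlp hvp hv1p (hrsum p q0)
    have hc10 : c1 ≠ 0 := by
      rintro rfl; rw [zero_smul] at hc1; exact hl1 hc1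
    -- lp = c1⁻¹ • l1 = (c1⁻¹ * c0) • l0
    have hlpa : lp a = 0 := by
      have h1a : l1 a = c0 * l0 a := by rw [hc0]; rfl
      have h2a : l1 a = c1 * lp a := by rw [hc1]; rfl
      rw [ha, mul_zero] at h1a
      have := h1a.symm.trans h2a
      field_simp at this
      exact (mul_eq_zero.1 this.symm).resolve_left hc10
    rw [rp, hlpa, zero_smul]
  · push_neg at hp0
    obtain ⟨a', ha'⟩ := hp0
    have hvp : vp ∉ Submodule.span ℂ {v0} := by
      intro h; exact ha' (by rw [rp]; exact smul_mem_span_singleton h _)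
    obtain ⟨c, hc⟩ := pair_kernel_prop r0 rp hl0 hv0 hvp (hrsum p0 p)
    have : lp a = 0 := by rw [hc]; simp [ha]
    rw [rp, this, zero_smul]

end LA2

section LA3
variable {W : Type*} [AddCommGroup W] [Module ℂ W] [FiniteDimensional ℂ W]

lemma one_le_finrank_of_ne_zero {S : Submodule ℂ W} {v : W} (hv : v ∈ S) (hv0 : v ≠ 0) :
    1 ≤ finrank ℂ S := by
  by_contra h
  have h0 : finrank ℂ S = 0 := by omega
  rw [Submodule.finrank_eq_zero] at h0
  rw [h0] at hv
  exact hv0 hv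

lemma li4_of_parts {Z : Submodule ℂ W} {a1 a2 b1 b2 : W}
    (hb1 : b1 ∈ Z) (hb2 : b2 ∈ Z)
    (ha : LinearIndependent ℂ ![Z.mkQ a1, Z.mkQ a2])
    (hb : LinearIndependent ℂ ![b1, b2]) :
    LinearIndependent ℂ ![a1, a2, b1, b2] := by
  rw [Fintype.linearIndependent_iff]
  intro g hg
  rw [Fin.sum_univ_four] at hg
  simp only [Matrix.cons_val_zero, Matrix.cons_val_one, Matrix.head_cons,
    Matrix.cons_val_two, Matrix.tail_cons, Matrix.cons_val_three] at hg
  have hq : g 0 • Z.mkQ a1 + g 1 • Z.mkQ a2 = 0 := by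
    have := congrArg Z.mkQ hg
    simp only [map_add, map_smul, map_zero] at this
    have hb1' : Z.mkQ b1 = 0 := (Submodule.Quotient.mk_eq_zero Z).2 hb1
    have hb2' : Z.mkQ b2 = 0 := (Submodule.Quotient.mk_eq_zero Z).2 hb2
    rw [hb1', hb2', smul_zero, smul_zero, add_zero, add_zero] at this
    exact this
  have h01 : g 0 = 0 ∧ g 1 = 0 := by
    have := Fintype.linearIndependent_iff.1 ha ![g 0, g 1]
    rw [Fin.sum_univ_two] at this
    simp only [Matrix.cons_val_zero, Matrix.cons_val_one, Matrix.head_cons] at this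
    have h := this hq
    exact ⟨h 0, h 1⟩
  have h23 : g 2 = 0 ∧ g 3 = 0 := by
    rw [h01.1, h01.2, zero_smul, zero_smul, zero_add, zero_add] at hg
    have := Fintype.linearIndependent_iff.1 hb ![g 2, g 3]
    rw [Fin.sum_univ_two] at this
    simp only [Matrix.cons_val_zero, Matrix.cons_val_one, Matrix.head_cons] at this
    have h := this hg
    exact ⟨h 0, h 1⟩
  intro i; fin_cases i
  · exact h01.1
  · exact h01.2
  · exact h23.1
  · exact h23.2

lemma span_pair_le {u w : W} {S : Submodule ℂ W} (hu : u ∈ S) (hw : w ∈ S) :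
    Submodule.span ℂ {u, w} ≤ S := by
  rw [Submodule.span_le]
  rintro v (rfl | rfl) <;> simp [hu, hw]

lemma sel {U1 U2 : Submodule ℂ W}
    (h1 : 2 ≤ finrank ℂ U1) (h2 : 2 ≤ finrank ℂ U2)
    (h12 : 4 ≤ finrank ℂ (U1 ⊔ U2 : Submodule ℂ W)) :
    ∃ a1 a2 b1 b2 : W, a1 ∈ U1 ∧ a2 ∈ U1 ∧ b1 ∈ U2 ∧ b2 ∈ U2 ∧
      LinearIndependent ℂ ![a1, a2, b1, b2] := by
  -- Step A : find b1 b2 ∈ U2 independent with 4 ≤ finrank (U1 ⊔ span {b1, b2})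
  have stepA : ∃ b1 b2 : W, b1 ∈ U2 ∧ b2 ∈ U2 ∧ LinearIndependent ℂ ![b1, b2] ∧
      4 ≤ finrank ℂ (U1 ⊔ Submodule.span ℂ {b1, b2} : Submodule ℂ W) := by
    rcases le_or_gt 4 (finrank ℂ U1) with hr1 | hr1
    · obtain ⟨b1, b2, hb1, hb2, hli⟩ := exists_pair_of_two_le_finrank h2
      exact ⟨b1, b2, hb1, hb2, hli,
        le_trans hr1 (Submodule.finrank_mono le_sup_left)⟩
    · -- finrank U1 ≤ 3
      have ht1 : finrank ℂ (U2.map U1.mkQ) + finrank ℂ (U1 ⊔ U2 : Submodule ℂ W)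
          = finrank ℂ U2 + finrank ℂ (U1 ⊔ U2 : Submodule ℂ W)
            - finrank ℂ (U1 ⊓ U2 : Submodule ℂ W) := by
        have hA := finrank_map_mkQ_add U1 U2
        omega
      have hF2 := Submodule.finrank_sup_add_finrank_inf_eq U1 U2
      have hA := finrank_map_mkQ_add U1 U2
      -- t1 = finrank (map mkQ U2) = finrank (U1 ⊔ U2) - finrank U1
      have ht : finrank ℂ (U2.map U1.mkQ) + finrank ℂ U1
          = finrank ℂ (U1 ⊔ U2 : Submodule ℂ W) := by omega
      rcases le_or_gt 2 (finrank ℂ (U2.map U1.mkQ)) with ht2 | ht2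
      · -- pick pair with independent images mod U1
        obtain ⟨w1, w2, hw1, hw2, hwli⟩ := exists_pair_of_two_le_finrank ht2
        obtain ⟨b1, hb1U, hb1⟩ := hw1
        obtain ⟨b2, hb2U, hb2⟩ := hw2
        have himg : LinearIndependent ℂ ![U1.mkQ b1, U1.mkQ b2] := by
          rw [hb1, hb2]; exact hwli
        have hbli : LinearIndependent ℂ ![b1, b2] := by
          have hcomp : (⇑U1.mkQ ∘ ![b1, b2]) = ![U1.mkQ b1, U1.mkQ b2] := by
            ext j; fin_cases j <;> rfl
          exact LinearIndependent.of_comp U1.mkQ (by rw [hcomp]; exact himg)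
        refine ⟨b1, b2, hb1U, hb2U, hbli, ?_⟩
        set Z := Submodule.span ℂ {b1, b2} with hZ
        have hZle : Z ≤ U2 := span_pair_le hb1U hb2U
        have hZsup := finrank_map_mkQ_add U1 (U1 ⊔ Z)
        have hinfeq : U1 ⊓ (U1 ⊔ Z) = U1 := inf_eq_left.2 le_sup_left
        rw [hinfeq] at hZsup
        have himgmem1 : U1.mkQ b1 ∈ (U1 ⊔ Z).map U1.mkQ :=
          ⟨b1, le_sup_right (a := U1) (Submodule.subset_span (by simp) : _ ∈ Z), rfl⟩
        have himgmem2 : U1.mkQ b2 ∈ (U1 ⊔ Z).map U1.mkQ :=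
          ⟨b2, le_sup_right (a := U1) (Submodule.subset_span (by simp) : _ ∈ Z), rfl⟩
        have h2' : 2 ≤ finrank ℂ ((U1 ⊔ Z).map U1.mkQ) :=
          two_le_finrank_of_pair himgmem1 himgmem2 himg
        omega
      · -- finrank (map mkQ U2) ≤ 1, hence finrank U1 = 3
        have hr13 : finrank ℂ U1 = 3 := by omega
        -- pick b1 ∈ U2 \ U1
        have hmap1 : 1 ≤ finrank ℂ (U2.map U1.mkQ) := by omega
        obtain ⟨wq, hwq, hwq0⟩ := exists_mem_ne_zero_of_one_le_finrank hmap1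
        obtain ⟨b1, hb1U, hb1⟩ := hwq
        have hb1notU1 : b1 ∉ U1 := by
          intro h
          exact hwq0 (by rw [← hb1]; exact (Submodule.Quotient.mk_eq_zero U1).2 h)
        have hb10 : b1 ≠ 0 := fun h => hb1notU1 (h ▸ U1.zero_mem)
        have hexb2 : ∃ b2, b2 ∈ U2 ∧ b2 ∉ Submodule.span ℂ {b1} := by
          by_contra hc; push_neg at hc
          have : U2 ≤ Submodule.span ℂ {b1} := hc
          have := Submodule.finrank_mono this
          have := finrank_span_singleton_le' (W := W) b1
          omega
        obtain ⟨b2, hb2U, hb2⟩ := hexb2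
        have hbli : LinearIndependent ℂ ![b1, b2] := li_pair_of_not_mem_span hb10 hb2
        refine ⟨b1, b2, hb1U, hb2U, hbli, ?_⟩
        set Z := Submodule.span ℂ {b1, b2} with hZ
        have hZsup := finrank_map_mkQ_add U1 (U1 ⊔ Z)
        have hinfeq : U1 ⊓ (U1 ⊔ Z) = U1 := inf_eq_left.2 le_sup_left
        rw [hinfeq] at hZsup
        have himgmem1 : U1.mkQ b1 ∈ (U1 ⊔ Z).map U1.mkQ :=
          ⟨b1, le_sup_right (a := U1) (Submodule.subset_span (by simp) : _ ∈ Z), rfl⟩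
        have h1' : 1 ≤ finrank ℂ ((U1 ⊔ Z).map U1.mkQ) := by
          apply one_le_finrank_of_ne_zero himgmem1
          intro h
          exact hb1notU1 ((Submodule.Quotient.mk_eq_zero U1).1 h)
        omega
  obtain ⟨b1, b2, hb1U, hb2U, hbli, hZ4⟩ := stepA
  set Z := Submodule.span ℂ {b1, b2} with hZdef
  -- Step B : find a1 a2 ∈ U1 with independent images mod Z
  have hZ2 : finrank ℂ Z ≤ 2 := by
    have hset : Set.range ![b1, b2] = {b1, b2} := by
      ext v
      simp [Fin.exists_fin_two]
      tauto
    have : Z = Submodule.span ℂ (Set.range ![b1, b2]) := by rw [hset]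
    rw [this, finrank_span_eq_card hbli]
    simp
  have hmapB := finrank_map_mkQ_add Z U1
  have hF2' := Submodule.finrank_sup_add_finrank_inf_eq Z U1
  have hsupeq : (Z ⊔ U1 : Submodule ℂ W) = U1 ⊔ Z := sup_comm Z U1
  rw [hsupeq] at hF2'
  have hmap2 : 2 ≤ finrank ℂ (U1.map Z.mkQ) := by omega
  obtain ⟨w1, w2, hw1, hw2, hwli⟩ := exists_pair_of_two_le_finrank hmap2
  obtain ⟨a1, ha1U, ha1⟩ := hw1
  obtain ⟨a2, ha2U, ha2⟩ := hw2
  have himg : LinearIndependent ℂ ![Z.mkQ a1, Z.mkQ a2] := by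
    rw [ha1, ha2]; exact hwli
  refine ⟨a1, a2, b1, b2, ha1U, ha2U, hb1U, hb2U, ?_⟩
  exact li4_of_parts (Submodule.subset_span (by simp)) (Submodule.subset_span (by simp))
    himg hbli

end LA3

section Abstract
open LinearMap
variable {W : Type*} [AddCommGroup W] [Module ℂ W] [FiniteDimensional ℂ W]
variable {V1 V2 : Type*} [AddCommGroup V1] [Module ℂ V1] [AddCommGroup V2] [Module ℂ V2]

theorem abstract_main (hW : 4 ≤ finrank ℂ W) (B : V1 →ₗ[ℂ] V2 →ₗ[ℂ] W)
    (hS : (⨆ p : V1, LinearMap.range (B p)) = ⊤)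
    (hP : ∀ p q : V1, 2 ≤ finrank ℂ (LinearMap.range (B p)) →
      2 ≤ finrank ℂ (LinearMap.range (B q)) →
      finrank ℂ (LinearMap.range (B p) ⊔ LinearMap.range (B q) : Submodule ℂ W) ≤ 3) :
    ∃ (l : V2 →ₗ[ℂ] ℂ) (v : W), l ≠ 0 ∧
      ∀ p a, l a = 0 → B p a ∈ Submodule.span ℂ {v} := by
  have htop : finrank ℂ (⊤ : Submodule ℂ W) = finrank ℂ W := finrank_top ℂ W
  -- Step 1 : all ranks ≤ 2
  have hrk : ∀ p, finrank ℂ (LinearMap.range (B p)) ≤ 2 := by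
    by_contra hc; push_neg at hc
    obtain ⟨p0, hp0⟩ := hc
    have h3 : finrank ℂ ((LinearMap.range (B p0))) ≤ 3 := by
      have := hP p0 p0 (by omega) (by omega); rwa [sup_idem] at this
    have hU3 : finrank ℂ ((LinearMap.range (B p0))) = 3 := by omega
    have hall : ∀ q, LinearMap.range (B q) ≤ (LinearMap.range (B p0)) := by
      intro q
      rcases le_or_gt 2 (finrank ℂ (LinearMap.range (B q))) with h2q | h2q
      · have hsup := hP p0 q (by omega) h2q
        have heq : (LinearMap.range (B p0)) = (LinearMap.range (B p0)) ⊔ LinearMap.range (B q) :=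
          eq_of_le_of_finrank_le le_sup_left (by omega)
        exact le_sup_right.trans heq.ge
      · by_cases hq0 : B q = 0
        · rw [hq0, LinearMap.range_zero]; exact bot_le
        · set s := p0 + q with hs
          have hBs : B s = B p0 + B q := map_add B p0 q
          have hUle : (LinearMap.range (B p0)) ≤ LinearMap.range (B s) ⊔ LinearMap.range (B q) := by
            rintro w ⟨a, rfl⟩
            have hw : B p0 a = B s a - B q a := by rw [hBs]; simp
            rw [hw]
            exact sub_mem (Submodule.mem_sup_left (LinearMap.mem_range_self _ a))
              (Submodule.mem_sup_right (LinearMap.mem_range_self _ a))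
          have hfs := Submodule.finrank_mono hUle
          have hsum_le := Submodule.finrank_sup_add_finrank_inf_eq
            (LinearMap.range (B s)) (LinearMap.range (B q))
          have h2s : 2 ≤ finrank ℂ (LinearMap.range (B s)) := by omega
          have hsup := hP p0 s (by omega) h2s
          have heq : (LinearMap.range (B p0)) = (LinearMap.range (B p0)) ⊔ LinearMap.range (B s) :=
            eq_of_le_of_finrank_le le_sup_left (by omega)
          have hBsle : LinearMap.range (B s) ≤ (LinearMap.range (B p0)) := le_sup_right.trans heq.ge
          rintro w ⟨a, rfl⟩
          have hw : B q a = B s a - B p0 a := by rw [hBs]; simp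
          rw [hw]
          exact (LinearMap.range (B p0)).sub_mem (hBsle (LinearMap.mem_range_self _ a))
            (LinearMap.mem_range_self _ a)
    have hle : (⊤ : Submodule ℂ W) ≤ (LinearMap.range (B p0)) := hS ▸ iSup_le hall
    have := Submodule.finrank_mono hle
    omega
  -- Step 2 : case no rank-2 member
  by_cases h2ex : ∃ p, 2 ≤ finrank ℂ (LinearMap.range (B p))
  swap
  · push_neg at h2ex
    rcases rank_one_family B (fun p => by have := h2ex p; omega) with ⟨v, hv⟩ | ⟨l, hl0, hker⟩
    · exfalso
      have hall : ∀ p, LinearMap.range (B p) ≤ Submodule.span ℂ {v} := by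
        rintro p w ⟨a, rfl⟩; exact hv p a
      have hle : (⊤ : Submodule ℂ W) ≤ Submodule.span ℂ {v} := hS ▸ iSup_le hall
      have := Submodule.finrank_mono hle
      have := finrank_span_singleton_le' v
      omega
    · exact ⟨l, 0, hl0, fun p a ha => by rw [hker p a ha]; exact Submodule.zero_mem _⟩
  obtain ⟨p1, hp1⟩ := h2ex
  -- Step 3 : some rank-2 member
  by_cases hline : ∃ v : W, v ≠ 0 ∧
      ∀ p, 2 ≤ finrank ℂ (LinearMap.range (B p)) → v ∈ LinearMap.range (B p)
  · -- common line case : quotient by the line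
    obtain ⟨v0, hv00, hv0mem⟩ := hline
    set L := Submodule.span ℂ {v0} with hL
    set C := B.compr₂ L.mkQ with hC
    have hCp : ∀ p, C p = L.mkQ.comp (B p) := by
      intro p; ext a; simp [hC, LinearMap.compr₂_apply]
    have hCrange : ∀ p, LinearMap.range (C p) = (LinearMap.range (B p)).map L.mkQ := by
      intro p; rw [hCp p, LinearMap.range_comp]
    have hC1 : ∀ p, finrank ℂ (LinearMap.range (C p)) ≤ 1 := by
      intro p; rw [hCrange p]
      rcases le_or_gt 2 (finrank ℂ (LinearMap.range (B p))) with h2p | h2p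
      · have hrkp : finrank ℂ (LinearMap.range (B p)) = 2 := le_antisymm (hrk p) h2p
        have hLle : L ≤ LinearMap.range (B p) :=
          (Submodule.span_singleton_le_iff_mem _ _).2 (hv0mem p h2p)
        have hmk := finrank_map_mkQ_add L (LinearMap.range (B p))
        have hinf : L ⊓ LinearMap.range (B p) = L := inf_eq_left.2 hLle
        rw [hinf] at hmk
        have hL1 : finrank ℂ L = 1 := finrank_span_singleton hv00
        omega
      · have := finrank_map_le L.mkQ (LinearMap.range (B p))
        omega
    rcases rank_one_family C hC1 with ⟨vb, hvb⟩ | ⟨l, hl0, hker⟩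
    · exfalso
      set Y := Submodule.comap L.mkQ (Submodule.span ℂ {vb}) with hY
      have hrle : ∀ p, LinearMap.range (B p) ≤ Y := by
        rintro p w ⟨a, rfl⟩
        rw [hY, Submodule.mem_comap]
        have h := hvb p a
        rw [hCp p] at h
        simpa using h
      have htople : (⊤ : Submodule ℂ W) ≤ Y := hS ▸ iSup_le hrle
      have hcomap := finrank_map_mkQ_add L Y
      have hmaple : Y.map L.mkQ ≤ Submodule.span ℂ {vb} := Submodule.map_comap_le _ _
      have h1 := Submodule.finrank_mono hmaple
      have h2 := finrank_span_singleton_le' vb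
      have h3 : finrank ℂ (L ⊓ Y : Submodule ℂ W) ≤ finrank ℂ L :=
        Submodule.finrank_mono inf_le_left
      have hL1 : finrank ℂ L = 1 := finrank_span_singleton hv00
      have := Submodule.finrank_mono htople
      omega
    · refine ⟨l, v0, hl0, fun p a ha => ?_⟩
      have h := hker p a ha
      rw [hCp p] at h
      simp only [LinearMap.comp_apply] at h
      exact (Submodule.Quotient.mk_eq_zero L).1 h
  · -- no common line : contradiction
    exfalso
    push_neg at hline
    have hrkp1 : finrank ℂ ((LinearMap.range (B p1))) = 2 := le_antisymm (hrk p1) hp1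
    have hp2 : ∃ p2, 2 ≤ finrank ℂ ((LinearMap.range (B p2))) ∧
        (LinearMap.range (B p2)) ≠ (LinearMap.range (B p1)) := by
      by_contra hc; push_neg at hc
      obtain ⟨v0, hv0mem, hv00⟩ :=
        exists_mem_ne_zero_of_one_le_finrank (S := (LinearMap.range (B p1))) (by omega)
      obtain ⟨p, hp2', hpnot⟩ := hline v0 hv00
      exact hpnot ((hc p hp2') ▸ hv0mem)
    obtain ⟨p2, hp2rk, hp2ne⟩ := hp2
    have hrk2 : finrank ℂ (LinearMap.range (B p2)) = 2 := le_antisymm (hrk p2) hp2rk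
    have hsup12 := hP p1 p2 hp1 hp2rk
    have hsupeq : finrank ℂ ((LinearMap.range (B p1)) ⊔ (LinearMap.range (B p2)) : Submodule ℂ W) = 3 := by
      by_contra h
      have e1 : (LinearMap.range (B p1)) = (LinearMap.range (B p1)) ⊔ (LinearMap.range (B p2)) := eq_of_le_of_finrank_le le_sup_left (by omega)
      have e2 : (LinearMap.range (B p2)) = (LinearMap.range (B p1)) ⊔ (LinearMap.range (B p2)) := eq_of_le_of_finrank_le le_sup_right (by omega)
      exact hp2ne (e2.trans e1.symm)
    have hinf12 : finrank ℂ ((LinearMap.range (B p1)) ⊓ (LinearMap.range (B p2)) : Submodule ℂ W) = 1 := by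
      have := Submodule.finrank_sup_add_finrank_inf_eq (LinearMap.range (B p1)) (LinearMap.range (B p2)); omega
    have hpair_inf : ∀ p q, 2 ≤ finrank ℂ (LinearMap.range (B p)) →
        2 ≤ finrank ℂ (LinearMap.range (B q)) →
        1 ≤ finrank ℂ (LinearMap.range (B p) ⊓ LinearMap.range (B q) : Submodule ℂ W) := by
      intro p q hp hq
      have := hP p q hp hq
      have := Submodule.finrank_sup_add_finrank_inf_eq
        (LinearMap.range (B p)) (LinearMap.range (B q))
      omega
    have hUpM1 : ∀ p, 2 ≤ finrank ℂ (LinearMap.range (B p)) →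
        ¬ LinearMap.range (B p) ≤ (LinearMap.range (B p1) ⊔ LinearMap.range (B p2)) →
        finrank ℂ (LinearMap.range (B p) ⊓ (LinearMap.range (B p1) ⊔ LinearMap.range (B p2)) : Submodule ℂ W) ≤ 1 := by
      intro p hp hM'
      by_contra h
      have h2' : 2 ≤ finrank ℂ (LinearMap.range (B p) ⊓ (LinearMap.range (B p1) ⊔ LinearMap.range (B p2)) : Submodule ℂ W) := by omega
      have hUp2 : finrank ℂ (LinearMap.range (B p)) = 2 := le_antisymm (hrk p) hp
      have heq : LinearMap.range (B p) ⊓ (LinearMap.range (B p1) ⊔ LinearMap.range (B p2)) = LinearMap.range (B p) :=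
        eq_of_le_of_finrank_le inf_le_left (by omega)
      exact hM' (heq ▸ inf_le_right)
    have hdich : ∀ p, 2 ≤ finrank ℂ (LinearMap.range (B p)) →
        LinearMap.range (B p) ≤ (LinearMap.range (B p1) ⊔ LinearMap.range (B p2)) ∨ (LinearMap.range (B p1) ⊓ LinearMap.range (B p2)) ≤ LinearMap.range (B p) := by
      intro p hp
      by_cases hMp : LinearMap.range (B p) ≤ (LinearMap.range (B p1) ⊔ LinearMap.range (B p2))
      · exact Or.inl hMp
      right
      have hUpM := hUpM1 p hp hMp
      obtain ⟨u, hu12, hu0⟩ := exists_mem_ne_zero_of_one_le_finrank (hpair_inf p p1 hp hp1)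
      obtain ⟨u', hu'12, hu'0⟩ := exists_mem_ne_zero_of_one_le_finrank (hpair_inf p p2 hp hp2rk)
      have huM : u ∈ LinearMap.range (B p) ⊓ (LinearMap.range (B p1) ⊔ LinearMap.range (B p2)) := ⟨hu12.1, (le_sup_left : (LinearMap.range (B p1)) ≤ (LinearMap.range (B p1) ⊔ LinearMap.range (B p2))) hu12.2⟩
      have hu'MM : u' ∈ LinearMap.range (B p) ⊓ (LinearMap.range (B p1) ⊔ LinearMap.range (B p2)) := ⟨hu'12.1, (le_sup_right : (LinearMap.range (B p2)) ≤ (LinearMap.range (B p1) ⊔ LinearMap.range (B p2))) hu'12.2⟩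
      have hspan : u' ∈ Submodule.span ℂ {u} := by
        by_contra hns
        have := two_le_finrank_of_pair huM hu'MM (li_pair_of_not_mem_span hu0 hns)
        omega
      obtain ⟨c, hc⟩ := Submodule.mem_span_singleton.1 hspan
      have hc0 : c ≠ 0 := by rintro rfl; rw [zero_smul] at hc; exact hu'0 hc.symm
      have huU2 : u ∈ (LinearMap.range (B p2)) := by
        have hu' : u = c⁻¹ • u' := by rw [← hc, smul_smul, inv_mul_cancel₀ hc0, one_smul]
        rw [hu']; exact (LinearMap.range (B p2)).smul_mem _ hu'12.2
      have hul12 : u ∈ (LinearMap.range (B p1) ⊓ LinearMap.range (B p2)) := ⟨hu12.2, huU2⟩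
      have hspanu : Submodule.span ℂ {u} = (LinearMap.range (B p1) ⊓ LinearMap.range (B p2)) :=
        eq_of_le_of_finrank_le ((Submodule.span_singleton_le_iff_mem _ _).2 hul12)
          (by rw [finrank_span_singleton hu0]; omega)
      rw [← hspanu]
      exact (Submodule.span_singleton_le_iff_mem _ _).2 hu12.1
    have hp3 : ∃ p3, 2 ≤ finrank ℂ (LinearMap.range (B p3)) ∧
        ¬ (LinearMap.range (B p1) ⊓ LinearMap.range (B p2)) ≤ LinearMap.range (B p3) := by
      by_contra hc; push_neg at hc
      obtain ⟨v0, hv0mem, hv00⟩ := exists_mem_ne_zero_of_one_le_finrank (S := (LinearMap.range (B p1) ⊓ LinearMap.range (B p2))) (by omega)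
      obtain ⟨p, hp2', hpnot⟩ := hline v0 hv00
      exact hpnot (hc p hp2' hv0mem)
    obtain ⟨p3, hp3rk, hp3not⟩ := hp3
    have hU3M : LinearMap.range (B p3) ≤ (LinearMap.range (B p1) ⊔ LinearMap.range (B p2)) := (hdich p3 hp3rk).resolve_right hp3not
    have hallM : ∀ p, 2 ≤ finrank ℂ (LinearMap.range (B p)) → LinearMap.range (B p) ≤ (LinearMap.range (B p1) ⊔ LinearMap.range (B p2)) := by
      intro p hp
      by_cases hMp : LinearMap.range (B p) ≤ (LinearMap.range (B p1) ⊔ LinearMap.range (B p2))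
      · exact hMp
      exfalso
      have h := (hdich p hp).resolve_left hMp
      have hUpM := hUpM1 p hp hMp
      have hl12le : (LinearMap.range (B p1) ⊓ LinearMap.range (B p2)) ≤ LinearMap.range (B p) ⊓ (LinearMap.range (B p1) ⊔ LinearMap.range (B p2)) :=
        le_inf h ((inf_le_left : (LinearMap.range (B p1) ⊓ LinearMap.range (B p2)) ≤ (LinearMap.range (B p1))).trans (le_sup_left : (LinearMap.range (B p1)) ≤ (LinearMap.range (B p1) ⊔ LinearMap.range (B p2))))
      have hUpMeq : LinearMap.range (B p) ⊓ (LinearMap.range (B p1) ⊔ LinearMap.range (B p2)) = (LinearMap.range (B p1) ⊓ LinearMap.range (B p2)) :=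
        (eq_of_le_of_finrank_le hl12le (by omega)).symm
      obtain ⟨z, hz, hz0⟩ := exists_mem_ne_zero_of_one_le_finrank (hpair_inf p3 p hp3rk hp)
      have hzl12 : z ∈ (LinearMap.range (B p1) ⊓ LinearMap.range (B p2)) := by rw [← hUpMeq]; exact ⟨hz.2, hU3M hz.1⟩
      have hspanz : Submodule.span ℂ {z} = (LinearMap.range (B p1) ⊓ LinearMap.range (B p2)) :=
        eq_of_le_of_finrank_le ((Submodule.span_singleton_le_iff_mem _ _).2 hzl12)
          (by rw [finrank_span_singleton hz0]; omega)
      exact hp3not (by rw [← hspanz]; exact (Submodule.span_singleton_le_iff_mem _ _).2 hz.1)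
    have hq : ∃ q, ¬ LinearMap.range (B q) ≤ (LinearMap.range (B p1) ⊔ LinearMap.range (B p2)) := by
      by_contra hc; push_neg at hc
      have hle : (⊤ : Submodule ℂ W) ≤ (LinearMap.range (B p1) ⊔ LinearMap.range (B p2)) := hS ▸ iSup_le hc
      have := Submodule.finrank_mono hle
      omega
    obtain ⟨q, hqM⟩ := hq
    have hq1 : finrank ℂ (LinearMap.range (B q)) ≤ 1 := by
      by_contra h; exact hqM (hallM q (by omega))
    obtain ⟨vq, lq, rq⟩ := rank_le_one_rep (B q) hq1
    obtain ⟨a0, ha0⟩ : ∃ a0, B q a0 ∉ (LinearMap.range (B p1) ⊔ LinearMap.range (B p2)) := by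
      by_contra hc; push_neg at hc
      exact hqM (by rintro w ⟨a, rfl⟩; exact hc a)
    have hlqa0 : lq a0 ≠ 0 := by
      intro h; apply ha0; rw [rq, h, zero_smul]; exact (LinearMap.range (B p1) ⊔ LinearMap.range (B p2)).zero_mem
    have hvqM : vq ∉ (LinearMap.range (B p1) ⊔ LinearMap.range (B p2)) := by
      intro h; apply ha0; rw [rq]; exact (LinearMap.range (B p1) ⊔ LinearMap.range (B p2)).smul_mem _ h
    have ha : ∃ a, lq a = 0 ∧ B p1 a ≠ 0 := by
      by_contra hc; push_neg at hc
      have hle : (LinearMap.range (B p1)) ≤ Submodule.span ℂ {B p1 a0} := by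
        rintro w ⟨a, rfl⟩
        have hker : lq (a - (lq a / lq a0) • a0) = 0 := by
          simp only [map_sub, map_smul, smul_eq_mul]
          field_simp; ring
        have h0 := hc _ hker
        rw [map_sub, map_smul] at h0
        have hB : B p1 a = (lq a / lq a0) • B p1 a0 := by rwa [sub_eq_zero] at h0
        exact Submodule.mem_span_singleton.2 ⟨lq a / lq a0, hB.symm⟩
      have h1' := Submodule.finrank_mono hle
      have := finrank_span_singleton_le' (B p1 a0)
      omega
    obtain ⟨a, halq, haB⟩ := ha
    set s := p1 + q with hs
    have hBs : ∀ b, B s b = B p1 b + lq b • vq := by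
      intro b; rw [map_add]; simp [rq]
    have hu : B s a = B p1 a := by rw [hBs, halq, zero_smul, add_zero]
    have huM : B p1 a ∈ (LinearMap.range (B p1) ⊔ LinearMap.range (B p2)) := (le_sup_left : (LinearMap.range (B p1)) ≤ (LinearMap.range (B p1) ⊔ LinearMap.range (B p2))) (LinearMap.mem_range_self _ a)
    have hw : B s a0 ∉ (LinearMap.range (B p1) ⊔ LinearMap.range (B p2)) := by
      rw [hBs]; intro h
      have hsm : lq a0 • vq ∈ (LinearMap.range (B p1) ⊔ LinearMap.range (B p2)) := by
        have hBp1a0 : B p1 a0 ∈ (LinearMap.range (B p1) ⊔ LinearMap.range (B p2)) := (le_sup_left : (LinearMap.range (B p1)) ≤ (LinearMap.range (B p1) ⊔ LinearMap.range (B p2))) (LinearMap.mem_range_self _ a0)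
        have := (LinearMap.range (B p1) ⊔ LinearMap.range (B p2)).sub_mem h hBp1a0; simpa using this
      apply hvqM
      have := (LinearMap.range (B p1) ⊔ LinearMap.range (B p2)).smul_mem (lq a0)⁻¹ hsm
      rwa [smul_smul, inv_mul_cancel₀ hlqa0, one_smul] at this
    have hli : LinearIndependent ℂ ![B s a, B s a0] := by
      rw [hu]; exact li_pair_of_mem_not_mem huM haB hw
    have h2s : 2 ≤ finrank ℂ (LinearMap.range (B s)) :=
      two_le_finrank_of_pair (LinearMap.mem_range_self _ a) (LinearMap.mem_range_self _ a0) hli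
    exact hw (hallM s h2s (LinearMap.mem_range_self _ a0))

end Abstract

section PolyAux
open MvPolynomial Module

variable {n : ℕ}

/-- The linear form associated to a covector. -/
noncomputable def toForm (n : ℕ) : Module.Dual ℂ (Fin (n+1) → ℂ) →ₗ[ℂ] MvPolynomial (Fin (n+1)) ℂ where
  toFun φ := ∑ i, MvPolynomial.C (φ (Pi.single i 1)) * MvPolynomial.X i
  map_add' φ ψ := by
    simp only [LinearMap.add_apply, map_add, add_mul, Finset.sum_add_distrib]
  map_smul' c φ := by
    simp only [LinearMap.smul_apply, smul_eq_mul, RingHom.id_apply, Finset.smul_sum,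
      MvPolynomial.smul_eq_C_mul, map_mul, mul_assoc]

lemma toForm_isHomogeneous (φ : Module.Dual ℂ (Fin (n+1) → ℂ)) :
    (toForm n φ).IsHomogeneous 1 := by
  apply MvPolynomial.IsHomogeneous.sum
  intro i _
  have h0 := (MvPolynomial.isHomogeneous_C (Fin (n+1)) (φ (Pi.single i 1))).mul
    (MvPolynomial.isHomogeneous_X ℂ i)
  simpa using h0

lemma eval_toForm (φ : Module.Dual ℂ (Fin (n+1) → ℂ)) (u : Fin (n+1) → ℂ) :
    MvPolynomial.eval u (toForm n φ) = φ u := by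
  have hu : u = ∑ i, (u i) • (Pi.single i 1 : Fin (n+1) → ℂ) := by
    ext j
    simp [Pi.single_apply, Finset.sum_apply]
  calc MvPolynomial.eval u (toForm n φ)
      = ∑ i, φ (Pi.single i 1) * u i := by
        simp [toForm]
    _ = φ u := by
        conv_rhs => rw [hu]
        rw [map_sum]
        simp [map_smul, mul_comm]

lemma toForm_proj (i : Fin (n+1)) :
    toForm n (LinearMap.proj i : (Fin (n+1) → ℂ) →ₗ[ℂ] ℂ) = MvPolynomial.X i := by
  show (∑ j, MvPolynomial.C ((Pi.single j 1 : Fin (n+1) → ℂ) i) * MvPolynomial.X j) = _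
  rw [Finset.sum_eq_single i]
  · simp
  · intro j _ hj
    simp [Pi.single_apply, hj]
  · intro h; exact absurd (Finset.mem_univ i) h

lemma aeval_eq_eval' (u : Fin (n+1) → ℂ) (p : MvPolynomial (Fin (n+1)) ℂ) :
    (MvPolynomial.aeval (R := ℂ) u) p = MvPolynomial.eval u p := by
  rw [MvPolynomial.aeval_def, Algebra.algebraMap_self]; rfl

instance homogeneousSubmodule_fd (d : ℕ) :
    FiniteDimensional ℂ (MvPolynomial.homogeneousSubmodule (Fin (n+1)) ℂ d) := by
  have hle : MvPolynomial.homogeneousSubmodule (Fin (n+1)) ℂ d ≤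
      MvPolynomial.restrictTotalDegree (Fin (n+1)) ℂ d := by
    intro p hp
    rw [MvPolynomial.mem_restrictTotalDegree]
    exact ((MvPolynomial.mem_homogeneousSubmodule d p).1 hp).totalDegree_le
  exact Submodule.finiteDimensional_of_le hle

end PolyAux

section GenPoint
open MvPolynomial Module

variable {n : ℕ}

/-- products `P * A` with `A` linear vanishing at `x`. -/
def prodSetPoint (n d : ℕ) (x : Fin (n+1) → ℂ) : Set (MvPolynomial (Fin (n+1)) ℂ) :=
  {g | ∃ (P : MvPolynomial (Fin (n+1)) ℂ) (φ : Module.Dual ℂ (Fin (n+1) → ℂ)),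
    P.IsHomogeneous (d-1) ∧ φ x = 0 ∧ g = P * toForm n φ}

lemma genPoint {d : ℕ} (hd : 1 ≤ d) (x : Fin (n+1) → ℂ) (hx : x ≠ 0)
    (F : MvPolynomial (Fin (n+1)) ℂ) (hF : F.IsHomogeneous d)
    (hFx : MvPolynomial.eval x F = 0) :
    F ∈ Submodule.span ℂ (prodSetPoint n d x) := by
  set SP := Submodule.span ℂ (prodSetPoint n d x) with hSP
  obtain ⟨i0, hi0⟩ : ∃ i0, x i0 ≠ 0 := Function.ne_iff.1 hx
  set ξ0 : Module.Dual ℂ (Fin (n+1) → ℂ) := (x i0)⁻¹ • LinearMap.proj i0 with hξ0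
  set L : MvPolynomial (Fin (n+1)) ℂ := toForm n ξ0 with hLdef
  have hL1 : L.IsHomogeneous 1 := toForm_isHomogeneous ξ0
  have hLx : MvPolynomial.eval x L = 1 := by
    rw [hLdef, eval_toForm, hξ0]
    simp [inv_mul_cancel₀ hi0]
  have hLpow : ∀ e : ℕ, (L ^ e).IsHomogeneous e := by
    intro e
    have := hL1.pow e
    rwa [one_mul] at this
  have aux : ∀ j : ℕ, j ≤ d → ∀ m : Fin (n+1) →₀ ℕ, m.degree = j → ∀ c : ℂ,
      L ^ (d - j) * MvPolynomial.monomial m c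
        - (MvPolynomial.eval x (MvPolynomial.monomial m c)) • L ^ d ∈ SP := by
    intro j
    induction j with
    | zero =>
      intro _ m hm c
      have hm0 : m = 0 := by
        ext i
        by_contra hne
        have h1 : 1 ≤ m i := Nat.one_le_iff_ne_zero.2 (by simpa using hne)
        have : 1 ≤ m.degree := le_trans h1 (Finsupp.le_degree i m)
        omega
      subst hm0
      have hzero : L ^ (d - 0) * MvPolynomial.monomial 0 c
          - (MvPolynomial.eval x (MvPolynomial.monomial 0 c)) • L ^ d = 0 := by
        rw [MvPolynomial.monomial_zero', MvPolynomial.smul_eq_C_mul]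
        simp [MvPolynomial.eval_C]
        ring
      rw [hzero]; exact SP.zero_mem
    | succ j ih =>
      intro hj m hm c
      obtain ⟨i, hi⟩ : ∃ i, m i ≠ 0 := by
        by_contra hc; push_neg at hc
        have : m = 0 := by ext i; simpa using hc i
        rw [this] at hm; simp at hm
      set m' : Fin (n+1) →₀ ℕ := m - Finsupp.single i 1 with hm'
      have hle : Finsupp.single i 1 ≤ m := by
        rw [Finsupp.single_le_iff]
        omega
      have hmm : m' + Finsupp.single i 1 = m := tsub_add_cancel_of_le hle
      have hdegadd : (m' + Finsupp.single i 1).degree = m'.degree + (Finsupp.single i 1).degree := by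
        simp only [Finsupp.degree_eq_weight_one]
        exact map_add _ m' (Finsupp.single i 1)
      have hdegsingle : (Finsupp.single i (1:ℕ)).degree = 1 := by
        exact Finsupp.degree_single i 1
      have hdeg' : m'.degree = j := by
        rw [hmm] at hdegadd
        rw [hdegsingle] at hdegadd
        omega
      have hmono : MvPolynomial.monomial m c = MvPolynomial.monomial m' c * MvPolynomial.X i := by
        rw [MvPolynomial.X, MvPolynomial.monomial_mul, mul_one, hmm]
      set φi : Module.Dual ℂ (Fin (n+1) → ℂ) := LinearMap.proj i - (x i) • ξ0 with hφidef
      have hφx : φi x = 0 := by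
        have hξ0x : ξ0 x = 1 := by
          rw [hξ0]; simp [inv_mul_cancel₀ hi0]
        rw [hφidef]
        simp [hξ0x]
      set Ai : MvPolynomial (Fin (n+1)) ℂ := MvPolynomial.X i - MvPolynomial.C (x i) * L
        with hAi
      have hAiφ : toForm n φi = Ai := by
        rw [hφidef, hAi, map_sub, map_smul, toForm_proj, MvPolynomial.smul_eq_C_mul, hLdef]
      have hP1 : (L ^ (d - (j+1)) * MvPolynomial.monomial m' c).IsHomogeneous (d - 1) := by
        have := (hLpow (d - (j+1))).mul (MvPolynomial.isHomogeneous_monomial c hdeg')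
        have heq : (d - (j+1)) + j = d - 1 := by omega
        rwa [heq] at this
      have hgen : (L ^ (d - (j+1)) * MvPolynomial.monomial m' c) * Ai ∈ SP :=
        Submodule.subset_span ⟨_, φi, hP1, hφx, by rw [hAiφ]⟩
      have hih := ih (by omega) m' hdeg' c
      have hevalm : MvPolynomial.eval x (MvPolynomial.monomial m c)
          = MvPolynomial.eval x (MvPolynomial.monomial m' c) * x i := by
        rw [hmono, map_mul, MvPolynomial.eval_X]
      have hpow : L ^ (d - j) = L ^ (d - (j+1)) * L := by
        rw [← pow_succ]
        congr 1
        omega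
      have hkey : L ^ (d - (j+1)) * MvPolynomial.monomial m c
            - (MvPolynomial.eval x (MvPolynomial.monomial m c)) • L ^ d
          = (L ^ (d - (j+1)) * MvPolynomial.monomial m' c) * Ai
            + (x i) • (L ^ (d - j) * MvPolynomial.monomial m' c
              - (MvPolynomial.eval x (MvPolynomial.monomial m' c)) • L ^ d) := by
        rw [hevalm, hmono, hpow, hAi]
        rw [MvPolynomial.smul_eq_C_mul, MvPolynomial.smul_eq_C_mul, MvPolynomial.smul_eq_C_mul]
        rw [map_mul]
        ring
      rw [hkey]
      exact SP.add_mem hgen (SP.smul_mem _ hih)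
  have hsum : F - (MvPolynomial.eval x F) • L ^ d
      = ∑ m ∈ F.support, (MvPolynomial.monomial m (MvPolynomial.coeff m F)
          - (MvPolynomial.eval x (MvPolynomial.monomial m (MvPolynomial.coeff m F))) • L ^ d) := by
    rw [Finset.sum_sub_distrib, MvPolynomial.support_sum_monomial_coeff]
    congr 1
    rw [← Finset.sum_smul]
    congr 1
    conv_lhs => rw [← MvPolynomial.support_sum_monomial_coeff F]
    rw [map_sum]
  have hmem : F - (MvPolynomial.eval x F) • L ^ d ∈ SP := by
    rw [hsum]
    apply Submodule.sum_mem
    intro m hmsupp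
    have hdegm : m.degree = d := by
      have := hF (MvPolynomial.mem_support_iff.1 hmsupp)
      rw [Finsupp.degree_eq_weight_one]; exact this
    have := aux d le_rfl m hdegm (MvPolynomial.coeff m F)
    rwa [Nat.sub_self, pow_zero, one_mul] at this
  rwa [hFx, zero_smul, sub_zero] at hmem

end GenPoint

section GenLine
open MvPolynomial Module

variable {n : ℕ}

/-- products `P * toForm φ` with `φ` vanishing on `y, z`. -/
def prodSetLine (n d : ℕ) (y z : Fin (n+1) → ℂ) : Set (MvPolynomial (Fin (n+1)) ℂ) :=
  {g | ∃ (P : MvPolynomial (Fin (n+1)) ℂ) (φ : Module.Dual ℂ (Fin (n+1) → ℂ)),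
    P.IsHomogeneous (d-1) ∧ φ y = 0 ∧ φ z = 0 ∧ g = P * toForm n φ}

noncomputable def binMap (Lξ Lη : MvPolynomial (Fin (n+1)) ℂ) (d : ℕ) :
    (Fin (d+1) → ℂ) →ₗ[ℂ] MvPolynomial (Fin (n+1)) ℂ where
  toFun co := ∑ t : Fin (d+1), co t • (Lξ ^ (t : ℕ) * Lη ^ (d - (t : ℕ)))
  map_add' a b := by simp [add_smul, Finset.sum_add_distrib]
  map_smul' c a := by simp [smul_smul, Finset.smul_sum]

lemma genLine {d : ℕ} (hd : 1 ≤ d) (y z : Fin (n+1) → ℂ)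
    (ξ η : Module.Dual ℂ (Fin (n+1) → ℂ))
    (hξy : ξ y = 1) (hξz : ξ z = 0) (hηy : η y = 0) (hηz : η z = 1)
    (F : MvPolynomial (Fin (n+1)) ℂ) (hF : F.IsHomogeneous d)
    (hvan : ∀ s t : ℂ, MvPolynomial.eval (s • y + t • z) F = 0) :
    F ∈ Submodule.span ℂ (prodSetLine n d y z) := by
  set SP := Submodule.span ℂ (prodSetLine n d y z) with hSP
  set Lξ : MvPolynomial (Fin (n+1)) ℂ := toForm n ξ with hLξdef
  set Lη : MvPolynomial (Fin (n+1)) ℂ := toForm n η with hLηdef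
  have hLξ1 : Lξ.IsHomogeneous 1 := toForm_isHomogeneous ξ
  have hLη1 : Lη.IsHomogeneous 1 := toForm_isHomogeneous η
  have hLξpow : ∀ e : ℕ, (Lξ ^ e).IsHomogeneous e := by
    intro e; have := hLξ1.pow e; rwa [one_mul] at this
  have hLηpow : ∀ e : ℕ, (Lη ^ e).IsHomogeneous e := by
    intro e; have := hLη1.pow e; rwa [one_mul] at this
  set Bin := LinearMap.range (binMap Lξ Lη d) with hBin
  -- main induction
  have aux : ∀ j : ℕ, j ≤ d → ∀ m : Fin (n+1) →₀ ℕ, m.degree = j → ∀ c : ℂ,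
      ∀ a b : ℕ, a + b = d - j →
      Lξ ^ a * Lη ^ b * MvPolynomial.monomial m c ∈ SP ⊔ Bin := by
    intro j
    induction j with
    | zero =>
      intro _ m hm c a b hab
      have hm0 : m = 0 := (Finsupp.degree_eq_zero_iff m).1 hm
      subst hm0
      apply Submodule.mem_sup_right
      have haf : a < d + 1 := by omega
      set idx : Fin (d+1) := ⟨a, haf⟩ with hidx
      refine ⟨(Pi.single idx c : Fin (d+1) → ℂ), ?_⟩
      have hb : b = d - a := by omega
      subst hb
      rw [binMap]
      simp only [LinearMap.coe_mk, AddHom.coe_mk]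
      rw [Finset.sum_eq_single idx]
      · simp [hidx, MvPolynomial.monomial_zero', MvPolynomial.smul_eq_C_mul]
        ring
      · intro t _ ht
        have hz : (Pi.single idx c : Fin (d+1) → ℂ) t = 0 := by simp [Pi.single_apply, ht]
        rw [hz, zero_smul]
      · intro h; exact absurd (Finset.mem_univ _) h
    | succ j ih =>
      intro hj m hm c a b hab
      obtain ⟨i, hi⟩ : ∃ i, m i ≠ 0 := by
        by_contra hc; push_neg at hc
        have : m = 0 := by ext i; simpa using hc i
        rw [this] at hm; simp at hm
      set m' : Fin (n+1) →₀ ℕ := m - Finsupp.single i 1 with hm'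
      have hle : Finsupp.single i 1 ≤ m := by
        rw [Finsupp.single_le_iff]; omega
      have hmm : m' + Finsupp.single i 1 = m := tsub_add_cancel_of_le hle
      have hdegadd : (m' + Finsupp.single i 1).degree = m'.degree + (Finsupp.single i 1).degree := by
        simp only [Finsupp.degree_eq_weight_one]
        exact map_add _ m' (Finsupp.single i 1)
      have hdegsingle : (Finsupp.single i (1:ℕ)).degree = 1 := by
        exact Finsupp.degree_single i 1
      have hdeg' : m'.degree = j := by
        rw [hmm, hdegsingle] at hdegadd; omega
      have hmono : MvPolynomial.monomial m c = MvPolynomial.monomial m' c * MvPolynomial.X i := by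
        rw [MvPolynomial.X, MvPolynomial.monomial_mul, mul_one, hmm]
      set φi : Module.Dual ℂ (Fin (n+1) → ℂ) :=
        LinearMap.proj i - (y i) • ξ - (z i) • η with hφi
      have hφiy : φi y = 0 := by
        rw [hφi]
        simp [hξy, hηy]
      have hφiz : φi z = 0 := by
        rw [hφi]
        simp [hξz, hηz]
      have hAi : toForm n φi = MvPolynomial.X i - MvPolynomial.C (y i) * Lξ
          - MvPolynomial.C (z i) * Lη := by
        rw [hφi, map_sub, map_sub, map_smul, map_smul, toForm_proj,
          MvPolynomial.smul_eq_C_mul, MvPolynomial.smul_eq_C_mul]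
      have hP1 : (Lξ ^ a * Lη ^ b * MvPolynomial.monomial m' c).IsHomogeneous (d - 1) := by
        have := ((hLξpow a).mul (hLηpow b)).mul (MvPolynomial.isHomogeneous_monomial c hdeg')
        have heq : (a + b) + j = d - 1 := by omega
        rwa [heq] at this
      have hgen : (Lξ ^ a * Lη ^ b * MvPolynomial.monomial m' c) * toForm n φi ∈ SP :=
        Submodule.subset_span ⟨_, φi, hP1, hφiy, hφiz, rfl⟩
      have hih1 := ih (by omega) m' hdeg' c (a+1) b (by omega)
      have hih2 := ih (by omega) m' hdeg' c a (b+1) (by omega)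
      have hkey : Lξ ^ a * Lη ^ b * MvPolynomial.monomial m c
          = (Lξ ^ a * Lη ^ b * MvPolynomial.monomial m' c) * toForm n φi
            + (y i) • (Lξ ^ (a+1) * Lη ^ b * MvPolynomial.monomial m' c)
            + (z i) • (Lξ ^ a * Lη ^ (b+1) * MvPolynomial.monomial m' c) := by
        rw [hmono, hAi, MvPolynomial.smul_eq_C_mul, MvPolynomial.smul_eq_C_mul]
        ring
      rw [hkey]
      refine Submodule.add_mem _ (Submodule.add_mem _ (Submodule.mem_sup_left hgen) ?_) ?_
      · exact Submodule.smul_mem _ _ hih1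
      · exact Submodule.smul_mem _ _ hih2
  -- F lies in SP ⊔ Bin
  have hFmem : F ∈ SP ⊔ Bin := by
    have hFs : F = ∑ m ∈ F.support, MvPolynomial.monomial m (MvPolynomial.coeff m F) :=
      (MvPolynomial.support_sum_monomial_coeff F).symm
    rw [hFs]
    apply Submodule.sum_mem
    intro m hmsupp
    have hdegm : m.degree = d := by
      have := hF (MvPolynomial.mem_support_iff.1 hmsupp)
      rw [Finsupp.degree_eq_weight_one]; exact this
    have := aux d le_rfl m hdegm (MvPolynomial.coeff m F) 0 0 (by omega)
    rwa [pow_zero, pow_zero, one_mul, one_mul] at this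
  obtain ⟨p, hp, q, hq, hpq⟩ := Submodule.mem_sup.1 hFmem
  obtain ⟨co, hco⟩ := hq
  -- generators of SP vanish on the plane spanned by y and z
  have hSPvan : ∀ s t : ℂ, ∀ g ∈ SP, MvPolynomial.eval (s • y + t • z) g = 0 := by
    intro s t g hg
    have hle : SP ≤ LinearMap.ker (MvPolynomial.aeval (R := ℂ) (s • y + t • z)).toLinearMap := by
      rw [hSP, Submodule.span_le]
      rintro g' ⟨P, φ, hP, hφy, hφz, rfl⟩
      simp only [SetLike.mem_coe, LinearMap.mem_ker, AlgHom.toLinearMap_apply]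
      rw [aeval_eq_eval', map_mul, eval_toForm]
      have : φ (s • y + t • z) = 0 := by
        rw [map_add, map_smul, map_smul, hφy, hφz]
        simp
      rw [this, mul_zero]
    have := hle hg
    simpa [aeval_eq_eval'] using this
  -- evaluate q on the plane
  have hqeval : ∀ s t : ℂ, MvPolynomial.eval (s • y + t • z) q = 0 := by
    intro s t
    have := hvan s t
    rw [← hpq, map_add, hSPvan s t p hp, zero_add] at this
    exact this
  have hLξeval : ∀ s t : ℂ, MvPolynomial.eval (s • y + t • z) Lξ = s := by
    intro s t
    rw [hLξdef, eval_toForm, map_add, map_smul, map_smul, hξy, hξz]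
    simp
  have hLηeval : ∀ s t : ℂ, MvPolynomial.eval (s • y + t • z) Lη = t := by
    intro s t
    rw [hLηdef, eval_toForm, map_add, map_smul, map_smul, hηy, hηz]
    simp
  have hqform : ∀ s t : ℂ, ∑ tt : Fin (d+1), co tt * s ^ (tt : ℕ) * t ^ (d - (tt : ℕ)) = 0 := by
    intro s t
    have := hqeval s t
    rw [← hco] at this
    rw [binMap] at this
    simp only [LinearMap.coe_mk, AddHom.coe_mk, map_sum] at this
    calc ∑ tt : Fin (d+1), co tt * s ^ (tt : ℕ) * t ^ (d - (tt : ℕ))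
        = ∑ tt : Fin (d+1), MvPolynomial.eval (s • y + t • z)
            (co tt • (Lξ ^ (tt : ℕ) * Lη ^ (d - (tt : ℕ)))) := by
          apply Finset.sum_congr rfl
          intro tt _
          rw [MvPolynomial.smul_eq_C_mul, map_mul, MvPolynomial.eval_C, map_mul,
            map_pow, map_pow, hLξeval, hLηeval]
          ring
      _ = 0 := this
  -- conclude co = 0 using single-variable polynomial identities
  have hco0 : ∀ tt : Fin (d+1), co tt = 0 := by
    intro tt
    set pol : Polynomial ℂ :=
      ∑ t : Fin (d+1), Polynomial.C (co t) * Polynomial.X ^ (t : ℕ) with hpol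
    have hpoleval : ∀ s : ℂ, pol.eval s = 0 := by
      intro s
      rw [hpol]
      have := hqform s 1
      simp only [one_pow, mul_one] at this
      rw [Polynomial.eval_finset_sum]
      simpa using this
    have hpol0 : pol = 0 := Polynomial.funext (fun r => by rw [hpoleval r]; simp)
    have hcoeff := congrArg (fun P : Polynomial ℂ => P.coeff (tt : ℕ)) hpol0
    simp only [hpol, Polynomial.finset_sum_coeff, Polynomial.coeff_C_mul,
      Polynomial.coeff_X_pow, Polynomial.coeff_zero] at hcoeff
    rw [Finset.sum_eq_single tt] at hcoeff
    · simpa using hcoeff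
    · intro t _ ht
      have : ¬ ((tt : ℕ) = (t : ℕ)) := fun h => ht (Fin.ext h.symm)
      simp [this]
    · intro h; exact absurd (Finset.mem_univ _) h
  have hq0 : q = 0 := by
    rw [← hco]
    have : co = 0 := funext hco0
    rw [this, map_zero]
  rw [← hpq, hq0, add_zero]
  exact hp

end GenLine

section Assembly
open MvPolynomial Module

variable (n d : ℕ) (x : Fin (n+1) → ℂ) (T : Submodule ℂ (MvPolynomial (Fin (n+1)) ℂ))

instance Sdx_fd : FiniteDimensional ℂ (SdxSubmodule n d x) :=
  Submodule.finiteDimensional_of_le (inf_le_left :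
    SdxSubmodule n d x ≤ MvPolynomial.homogeneousSubmodule (Fin (n+1)) ℂ d)

instance IV_fd (V : Submodule ℂ (Fin (n+1) → ℂ)) : FiniteDimensional ℂ (IVSubmodule n d V) :=
  Submodule.finiteDimensional_of_le (inf_le_left :
    IVSubmodule n d V ≤ MvPolynomial.homogeneousSubmodule (Fin (n+1)) ℂ d)

/-- the pulled-back submodule of `T` inside `S^d_x`. -/
noncomputable def NQ : Submodule ℂ (SdxSubmodule n d x) :=
  (T ⊓ SdxSubmodule n d x).comap (SdxSubmodule n d x).subtype

/-- the quotient `S^d_x / T`. -/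
abbrev WQ := (SdxSubmodule n d x) ⧸ (NQ n d x T)

/-- covectors vanishing at `x`. -/
noncomputable def KxD : Submodule ℂ (Module.Dual ℂ (Fin (n+1) → ℂ)) :=
  LinearMap.ker (Module.Dual.eval ℂ (Fin (n+1) → ℂ) x)

lemma mem_KxD_iff (φ : Module.Dual ℂ (Fin (n+1) → ℂ)) : φ ∈ KxD n x ↔ φ x = 0 := by
  rw [KxD, LinearMap.mem_ker]
  constructor
  · intro h; exact h
  · intro h; exact h

lemma mem_Sdx_prod (hd : 1 ≤ d) (P : MvPolynomial (Fin (n+1)) ℂ)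
    (φ : Module.Dual ℂ (Fin (n+1) → ℂ)) (hP : P.IsHomogeneous (d-1)) (hφ : φ x = 0) :
    P * toForm n φ ∈ SdxSubmodule n d x := by
  refine Submodule.mem_inf.2 ⟨?_, ?_⟩
  · rw [MvPolynomial.mem_homogeneousSubmodule]
    have := hP.mul (toForm_isHomogeneous φ)
    have heq : (d-1) + 1 = d := by omega
    rwa [heq] at this
  · simp only [LinearMap.mem_ker, AlgHom.toLinearMap_apply]
    rw [aeval_eq_eval', map_mul, eval_toForm, hφ, mul_zero]

set_option maxHeartbeats 1000000 in
/-- the bilinear family `(P, φ) ↦ [P · A_φ] ∈ S^d_x / T`. -/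
noncomputable def BmapD (hd : 1 ≤ d) :
    (MvPolynomial.homogeneousSubmodule (Fin (n+1)) ℂ (d-1)) →ₗ[ℂ]
      (KxD n x) →ₗ[ℂ] WQ n d x T :=
  LinearMap.mk₂ ℂ
    (fun P φ => (NQ n d x T).mkQ ⟨P.1 * toForm n φ.1,
      mem_Sdx_prod n d x hd P.1 φ.1 ((MvPolynomial.mem_homogeneousSubmodule _ _).1 P.2)
        ((mem_KxD_iff n x φ.1).1 φ.2)⟩)
    (by
      intro P1 P2 φ
      rw [← map_add]
      congr 1
      apply Subtype.ext
      simp [add_mul])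
    (by
      intro c P φ
      rw [← map_smul]
      congr 1
      apply Subtype.ext
      simp [MvPolynomial.smul_eq_C_mul, mul_assoc])
    (by
      intro P φ1 φ2
      rw [← map_add]
      congr 1
      apply Subtype.ext
      simp [mul_add])
    (by
      intro c P φ
      rw [← map_smul]
      congr 1
      apply Subtype.ext
      simp only [Submodule.coe_smul, SetLike.val_smul, map_smul]
      rw [MvPolynomial.smul_eq_C_mul, MvPolynomial.smul_eq_C_mul]
      ring)

lemma BmapD_apply (hd : 1 ≤ d) (P : MvPolynomial.homogeneousSubmodule (Fin (n+1)) ℂ (d-1))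
    (φ : KxD n x) :
    BmapD n d x T hd P φ = (NQ n d x T).mkQ ⟨P.1 * toForm n φ.1,
      mem_Sdx_prod n d x hd P.1 φ.1 ((MvPolynomial.mem_homogeneousSubmodule _ _).1 P.2)
        ((mem_KxD_iff n x φ.1).1 φ.2)⟩ := rfl

end Assembly

section Assembly2
open MvPolynomial Module

variable (n d : ℕ) (x : Fin (n+1) → ℂ) (T : Submodule ℂ (MvPolynomial (Fin (n+1)) ℂ))

lemma BmapD_sup (hd : 1 ≤ d) (hx : x ≠ 0) :
    (⨆ P, LinearMap.range (BmapD n d x T hd P)) = ⊤ := by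
  rw [eq_top_iff]
  rintro w -
  obtain ⟨F, rfl⟩ := Submodule.mkQ_surjective (NQ n d x T) w
  set Y := ⨆ P, LinearMap.range (BmapD n d x T hd P) with hY
  have hFspan : F.1 ∈ Submodule.span ℂ (prodSetPoint n d x) := by
    apply genPoint hd x hx
    · exact (MvPolynomial.mem_homogeneousSubmodule _ _).1 (Submodule.mem_inf.1 F.2).1
    · have h2 := (Submodule.mem_inf.1 F.2).2
      simp only [LinearMap.mem_ker, AlgHom.toLinearMap_apply] at h2
      rwa [aeval_eq_eval'] at h2
  have hsubset : Submodule.span ℂ (prodSetPoint n d x) ≤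
      Submodule.map (SdxSubmodule n d x).subtype
        (Submodule.comap (NQ n d x T).mkQ Y) := by
    rw [Submodule.span_le]
    rintro g ⟨P, φ, hP, hφ, rfl⟩
    refine ⟨⟨P * toForm n φ, mem_Sdx_prod n d x hd P φ hP hφ⟩, ?_, rfl⟩
    simp only [SetLike.mem_coe, Submodule.mem_comap]
    apply (le_iSup (fun P => LinearMap.range (BmapD n d x T hd P))
      (⟨P, (MvPolynomial.mem_homogeneousSubmodule _ _).2 hP⟩ :
        MvPolynomial.homogeneousSubmodule (Fin (n+1)) ℂ (d-1)))
    exact ⟨⟨φ, (mem_KxD_iff n x φ).2 hφ⟩, rfl⟩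
  obtain ⟨F', hF'Y, hF'eq⟩ := hsubset hFspan
  have hFF : F' = F := Subtype.ext hF'eq
  rw [← hFF]
  exact hF'Y

lemma BmapD_pairs (hd : 1 ≤ d) (hT : T ≤ SdxSubmodule n d x)
    (hbase : ∀ P Q : MvPolynomial (Fin (n + 1)) ℂ,
      P.IsHomogeneous (d - 1) → Q.IsHomogeneous (d - 1) →
      ∀ A₁ A₂ B₁ B₂ : MvPolynomial (Fin (n + 1)) ℂ,
        A₁.IsHomogeneous 1 → A₂.IsHomogeneous 1 →
        B₁.IsHomogeneous 1 → B₂.IsHomogeneous 1 →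
        MvPolynomial.eval x A₁ = 0 → MvPolynomial.eval x A₂ = 0 →
        MvPolynomial.eval x B₁ = 0 → MvPolynomial.eval x B₂ = 0 →
        ∃ c : Fin 4 → ℂ, c ≠ 0 ∧
          c 0 • (P * A₁) + c 1 • (P * A₂) + c 2 • (Q * B₁) + c 3 • (Q * B₂) ∈ T) :
    ∀ p q, 2 ≤ finrank ℂ (LinearMap.range (BmapD n d x T hd p)) →
      2 ≤ finrank ℂ (LinearMap.range (BmapD n d x T hd q)) →
      finrank ℂ (LinearMap.range (BmapD n d x T hd p) ⊔ LinearMap.range (BmapD n d x T hd q) :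
        Submodule ℂ (WQ n d x T)) ≤ 3 := by
  intro p q hp hq
  by_contra hcon
  have h12 : 4 ≤ finrank ℂ (LinearMap.range (BmapD n d x T hd p) ⊔
      LinearMap.range (BmapD n d x T hd q) : Submodule ℂ (WQ n d x T)) := by omega
  obtain ⟨a1, a2, b1, b2, ha1, ha2, hb1, hb2, hli⟩ := sel hp hq h12
  obtain ⟨φ1, hφ1⟩ := LinearMap.mem_range.1 ha1
  obtain ⟨φ2, hφ2⟩ := LinearMap.mem_range.1 ha2
  obtain ⟨ψ1, hψ1⟩ := LinearMap.mem_range.1 hb1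
  obtain ⟨ψ2, hψ2⟩ := LinearMap.mem_range.1 hb2
  have hPhom : (p : MvPolynomial (Fin (n+1)) ℂ).IsHomogeneous (d-1) :=
    (MvPolynomial.mem_homogeneousSubmodule _ _).1 p.2
  have hQhom : (q : MvPolynomial (Fin (n+1)) ℂ).IsHomogeneous (d-1) :=
    (MvPolynomial.mem_homogeneousSubmodule _ _).1 q.2
  have hφx : ∀ φ : KxD n x, MvPolynomial.eval x (toForm n φ.1) = 0 := by
    intro φ
    rw [eval_toForm]
    exact (mem_KxD_iff n x φ.1).1 φ.2
  obtain ⟨c, hc0, hcT⟩ := hbase p.1 q.1 hPhom hQhom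
    (toForm n φ1.1) (toForm n φ2.1) (toForm n ψ1.1) (toForm n ψ2.1)
    (toForm_isHomogeneous _) (toForm_isHomogeneous _)
    (toForm_isHomogeneous _) (toForm_isHomogeneous _)
    (hφx φ1) (hφx φ2) (hφx ψ1) (hφx ψ2)
  set g1 := p.1 * toForm n φ1.1 with hg1
  set g2 := p.1 * toForm n φ2.1 with hg2
  set g3 := q.1 * toForm n ψ1.1 with hg3
  set g4 := q.1 * toForm n ψ2.1 with hg4
  have hm1 : g1 ∈ SdxSubmodule n d x := mem_Sdx_prod n d x hd _ _ hPhom ((mem_KxD_iff n x _).1 φ1.2)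
  have hm2 : g2 ∈ SdxSubmodule n d x := mem_Sdx_prod n d x hd _ _ hPhom ((mem_KxD_iff n x _).1 φ2.2)
  have hm3 : g3 ∈ SdxSubmodule n d x := mem_Sdx_prod n d x hd _ _ hQhom ((mem_KxD_iff n x _).1 ψ1.2)
  have hm4 : g4 ∈ SdxSubmodule n d x := mem_Sdx_prod n d x hd _ _ hQhom ((mem_KxD_iff n x _).1 ψ2.2)
  have hcomboSdx : c 0 • g1 + c 1 • g2 + c 2 • g3 + c 3 • g4 ∈ SdxSubmodule n d x := by
    apply Submodule.add_mem
    apply Submodule.add_mem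
    apply Submodule.add_mem
    all_goals exact Submodule.smul_mem _ _ (by assumption)
  have hsubty : (⟨c 0 • g1 + c 1 • g2 + c 2 • g3 + c 3 • g4, hcomboSdx⟩ :
      SdxSubmodule n d x)
      = c 0 • ⟨g1, hm1⟩ + c 1 • ⟨g2, hm2⟩ + c 2 • ⟨g3, hm3⟩ + c 3 • ⟨g4, hm4⟩ := by
    apply Subtype.ext
    simp
  have hzero : (NQ n d x T).mkQ ⟨c 0 • g1 + c 1 • g2 + c 2 • g3 + c 3 • g4, hcomboSdx⟩ = 0 := by
    rw [Submodule.mkQ_apply, Submodule.Quotient.mk_eq_zero]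
    rw [NQ, Submodule.mem_comap]
    exact Submodule.mem_inf.2 ⟨hcT, hcomboSdx⟩
  rw [hsubty] at hzero
  simp only [map_add, map_smul] at hzero
  have hBeq1 : (NQ n d x T).mkQ ⟨g1, hm1⟩ = a1 := by rw [← hφ1]; rfl
  have hBeq2 : (NQ n d x T).mkQ ⟨g2, hm2⟩ = a2 := by rw [← hφ2]; rfl
  have hBeq3 : (NQ n d x T).mkQ ⟨g3, hm3⟩ = b1 := by rw [← hψ1]; rfl
  have hBeq4 : (NQ n d x T).mkQ ⟨g4, hm4⟩ = b2 := by rw [← hψ2]; rfl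
  rw [hBeq1, hBeq2, hBeq3, hBeq4] at hzero
  have hall0 := Fintype.linearIndependent_iff.1 hli c (by
    rw [Fin.sum_univ_four]
    simp only [Matrix.cons_val_zero, Matrix.cons_val_one, Matrix.head_cons,
      Matrix.cons_val_two, Matrix.tail_cons, Matrix.cons_val_three]
    exact hzero)
  exact hc0 (funext hall0)

end Assembly2

section LA5
lemma finrank_ker_functional {M : Type*} [AddCommGroup M] [Module ℂ M] [FiniteDimensional ℂ M]
    (f : M →ₗ[ℂ] ℂ) (hf : f ≠ 0) :
    Module.finrank ℂ (LinearMap.ker f) + 1 = Module.finrank ℂ M := by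
  have h := LinearMap.finrank_range_add_finrank_ker f
  have hex : ∃ a, f a ≠ 0 := by
    by_contra hc; push_neg at hc; exact hf (by ext a; simp [hc a])
  obtain ⟨a, ha⟩ := hex
  have h1 : 1 ≤ Module.finrank ℂ (LinearMap.range f) :=
    one_le_finrank_of_ne_zero (LinearMap.mem_range_self f a) ha
  have h2 : Module.finrank ℂ (LinearMap.range f) ≤ 1 := by
    have := Submodule.finrank_le (LinearMap.range f)
    rwa [Module.finrank_self] at this
  omega
end LA5

/-- Lemma 3.2: a codimension-4 subspace `T ⊆ S^d_x` lying in the base locus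
of `H^0(Λ⁴ M^d_{ℙ^n}(2))` (i.e. such that for all `P, Q ∈ S^{d-1}` and linear forms
`A₁, A₂, B₁, B₂` vanishing at `x`, the images of `P A₁, P A₂, Q B₁, Q B₂` in `S^d_x / T`
are linearly dependent) must contain a hyperplane of the degree-`d` part of the ideal of
a line through `x`. Here `d = 2n - 2 - k`, `1 ≤ k ≤ n - 5`. -/
theorem base_locus_wedge4_contains_hyperplane_of_line_ideal
    (n k : ℕ) (hn : 6 ≤ n) (hk1 : 1 ≤ k) (hk2 : k ≤ n - 5)
    (d : ℕ) (hd : d = 2 * n - 2 - k)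
    (x : Fin (n + 1) → ℂ) (hx : x ≠ 0)
    (T : Submodule ℂ (MvPolynomial (Fin (n + 1)) ℂ))
    (hT : T ≤ SdxSubmodule n d x)
    (hcodim : relCodim T (SdxSubmodule n d x) = 4)
    (hbase : ∀ P Q : MvPolynomial (Fin (n + 1)) ℂ,
      P.IsHomogeneous (d - 1) → Q.IsHomogeneous (d - 1) →
      ∀ A₁ A₂ B₁ B₂ : MvPolynomial (Fin (n + 1)) ℂ,
        A₁.IsHomogeneous 1 → A₂.IsHomogeneous 1 →
        B₁.IsHomogeneous 1 → B₂.IsHomogeneous 1 →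
        MvPolynomial.eval x A₁ = 0 → MvPolynomial.eval x A₂ = 0 →
        MvPolynomial.eval x B₁ = 0 → MvPolynomial.eval x B₂ = 0 →
        ∃ c : Fin 4 → ℂ, c ≠ 0 ∧
          c 0 • (P * A₁) + c 1 • (P * A₂) + c 2 • (Q * B₁) + c 3 • (Q * B₂) ∈ T) :
    ∃ V : Submodule ℂ (Fin (n + 1) → ℂ),
      Module.finrank ℂ V = 2 ∧ x ∈ V ∧
      relCodim T (IVSubmodule n d V) ≤ 1 := by
  classical
  have hd1 : 1 ≤ d := by omega
  have hW4 : Module.finrank ℂ (WQ n d x T) = 4 := hcodim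
  obtain ⟨l, v, hl0, hvprop⟩ := abstract_main (le_of_eq hW4.symm) (BmapD n d x T hd1)
    (BmapD_sup n d x T hd1 hx) (BmapD_pairs n d x T hd1 hT hbase)
  -- the 2-plane V
  set HH : Submodule ℂ (Module.Dual ℂ (Fin (n+1) → ℂ)) :=
    Submodule.map (KxD n x).subtype (LinearMap.ker l) with hHH
  set V := HH.dualCoannihilator with hVdef
  have hE : Module.finrank ℂ (Fin (n+1) → ℂ) = n + 1 := Module.finrank_fin_fun ℂ
  have hdual : Module.finrank ℂ (Module.Dual ℂ (Fin (n+1) → ℂ)) = n + 1 := by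
    rw [Subspace.dual_finrank_eq, hE]
  obtain ⟨i0, hi0⟩ : ∃ i0, x i0 ≠ 0 := Function.ne_iff.1 hx
  have hevne : Module.Dual.eval ℂ (Fin (n+1) → ℂ) x ≠ 0 := by
    intro h
    have h0 : (Module.Dual.eval ℂ (Fin (n+1) → ℂ) x)
        (LinearMap.proj i0 : (Fin (n+1) → ℂ) →ₗ[ℂ] ℂ) = x i0 := rfl
    rw [h] at h0
    exact hi0 (by simpa using h0.symm)
  have hKx : Module.finrank ℂ (KxD n x) = n := by
    have := finrank_ker_functional (Module.Dual.eval ℂ (Fin (n+1) → ℂ) x) hevne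
    rw [hdual] at this
    rw [KxD]
    omega
  have hkerl : Module.finrank ℂ (LinearMap.ker l) = n - 1 := by
    have := finrank_ker_functional l hl0
    rw [hKx] at this
    omega
  have hHHfin : Module.finrank ℂ HH = n - 1 := by
    rw [hHH]
    have hfeq : Module.finrank ℂ (LinearMap.ker l)
        = Module.finrank ℂ (Submodule.map (KxD n x).subtype (LinearMap.ker l)) :=
      LinearEquiv.finrank_eq (Submodule.equivMapOfInjective (KxD n x).subtype
        (Submodule.injective_subtype (KxD n x)) (LinearMap.ker l))
    omega
  have hVfin : Module.finrank ℂ V = 2 := by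
    have h := Subspace.finrank_add_finrank_dualCoannihilator_eq HH
    rw [hE, hHHfin] at h
    rw [hVdef]
    omega
  have hxV : x ∈ V := by
    rw [hVdef, Submodule.mem_dualCoannihilator]
    rintro φ ⟨ψ, hψker, rfl⟩
    exact (mem_KxD_iff n x ψ.1).1 ψ.2
  refine ⟨V, hVfin, hxV, ?_⟩
  have hVann : V.dualAnnihilator = HH := by
    have hle : HH ≤ V.dualAnnihilator := by
      intro φ hφ
      rw [Submodule.mem_dualAnnihilator]
      intro u hu
      rw [hVdef] at hu
      exact (Submodule.mem_dualCoannihilator u).1 hu φ hφ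
    have hfr : Module.finrank ℂ V.dualAnnihilator = n - 1 := by
      have h1 := LinearEquiv.finrank_eq (Subspace.quotEquivAnnihilator V)
      have h2 := Submodule.finrank_quotient_add_finrank V
      rw [hE] at h2; rw [hVfin] at h2; omega
    exact (eq_of_le_of_finrank_le hle (by rw [hfr, hHHfin])).symm
  -- a basis of V
  have b := Module.finBasisOfFinrankEq ℂ V hVfin
  set y : Fin (n+1) → ℂ := (b 0).1 with hydef
  set z : Fin (n+1) → ℂ := (b 1).1 with hzdef
  have hyV : y ∈ V := (b 0).2
  have hzV : z ∈ V := (b 1).2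
  have hyz : LinearIndependent ℂ ![y, z] := by
    have h := b.linearIndependent.map' V.subtype (Submodule.ker_subtype V)
    have heq : (⇑V.subtype ∘ ⇑b) = ![y, z] := by
      ext i; fin_cases i <;> rfl
    rwa [heq] at h
  have hynez : y ≠ z := by
    intro h
    have h2 : ![y, z] 0 = ![y, z] 1 := by simp [h]
    have h3 := hyz.injective h2
    exact absurd h3 (by decide)
  have hyzspan : Submodule.span ℂ {y, z} = V := by
    apply eq_of_le_of_finrank_le (span_pair_le hyV hzV)
    have hset : Set.range ![y, z] = {y, z} := by
      ext w; simp [Fin.exists_fin_two]; tauto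
    have h2 : Module.finrank ℂ (Submodule.span ℂ {y, z}) = 2 := by
      rw [← hset, finrank_span_eq_card hyz]; simp
    rw [hVfin, h2]
  -- dual pair for y z
  have hliset : LinearIndepOn ℂ id ({y, z} : Set (Fin (n+1) → ℂ)) := by
    have hset : Set.range ![y, z] = {y, z} := by
      ext w; simp [Fin.exists_fin_two]; tauto
    have := (linearIndepOn_id_range_iff hyz.injective).mpr hyz
    rwa [hset] at this
  have hyin : y ∈ hliset.extend (Set.subset_univ _) :=
    hliset.subset_extend _ (by simp : y ∈ ({y, z} : Set (Fin (n+1) → ℂ)))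
  have hzin : z ∈ hliset.extend (Set.subset_univ _) :=
    hliset.subset_extend _ (by simp : z ∈ ({y, z} : Set (Fin (n+1) → ℂ)))
  set BB := Basis.extend hliset with hBB
  set ξ := BB.coord ⟨y, hyin⟩ with hξdef
  set η := BB.coord ⟨z, hzin⟩ with hηdef
  have hBy : BB ⟨y, hyin⟩ = y := Basis.extend_apply_self hliset ⟨y, hyin⟩
  have hBz : BB ⟨z, hzin⟩ = z := Basis.extend_apply_self hliset ⟨z, hzin⟩
  have hne : (⟨y, hyin⟩ : hliset.extend (Set.subset_univ _)) ≠ ⟨z, hzin⟩ := by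
    intro h; exact hynez (Subtype.mk_eq_mk.1 h)
  have hξy : ξ y = 1 := by
    have h1 : ξ (BB ⟨y, hyin⟩) = 1 := by
      rw [hξdef, Basis.coord_apply, Basis.repr_self]; simp
    rwa [hBy] at h1
  have hξz : ξ z = 0 := by
    have h1 : ξ (BB ⟨z, hzin⟩) = 0 := by
      rw [hξdef, Basis.coord_apply, Basis.repr_self]
      exact Finsupp.single_eq_of_ne' (Ne.symm hne)
    rwa [hBz] at h1
  have hηy : η y = 0 := by
    have h1 : η (BB ⟨y, hyin⟩) = 0 := by
      rw [hηdef, Basis.coord_apply, Basis.repr_self]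
      exact Finsupp.single_eq_of_ne' hne
    rwa [hBy] at h1
  have hηz : η z = 1 := by
    have h1 : η (BB ⟨z, hzin⟩) = 1 := by
      rw [hηdef, Basis.coord_apply, Basis.repr_self]; simp
    rwa [hBz] at h1
  -- membership chain for I_V(d)
  have hIVle : IVSubmodule n d V ≤ SdxSubmodule n d x := by
    intro F hF
    obtain ⟨h1, h2⟩ := Submodule.mem_inf.1 hF
    refine Submodule.mem_inf.2 ⟨h1, ?_⟩
    exact (Submodule.mem_iInf _).1 ((Submodule.mem_iInf _).1 h2 x) hxV
  set ρ : (IVSubmodule n d V) →ₗ[ℂ] WQ n d x T :=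
    (NQ n d x T).mkQ.comp (Submodule.inclusion hIVle) with hρdef
  -- range of ρ is inside the line spanned by v
  have hρrange : ∀ F : IVSubmodule n d V, ρ F ∈ Submodule.span ℂ {v} := by
    intro F
    have hFhom : (F : MvPolynomial (Fin (n+1)) ℂ).IsHomogeneous d :=
      (MvPolynomial.mem_homogeneousSubmodule _ _).1 (Submodule.mem_inf.1 F.2).1
    have hvan : ∀ s t : ℂ, MvPolynomial.eval (s • y + t • z) F.1 = 0 := by
      intro s t
      have humem : s • y + t • z ∈ V := V.add_mem (V.smul_mem s hyV) (V.smul_mem t hzV)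
      have h2 := (Submodule.mem_inf.1 F.2).2
      have := (Submodule.mem_iInf _).1 ((Submodule.mem_iInf _).1 h2 (s • y + t • z)) humem
      simp only [LinearMap.mem_ker, AlgHom.toLinearMap_apply] at this
      rwa [aeval_eq_eval'] at this
    have hFspan : F.1 ∈ Submodule.span ℂ (prodSetLine n d y z) :=
      genLine hd1 y z ξ η hξy hξz hηy hηz F.1 hFhom hvan
    have hsubset : Submodule.span ℂ (prodSetLine n d y z) ≤
        Submodule.map (SdxSubmodule n d x).subtype
          (Submodule.comap (NQ n d x T).mkQ (Submodule.span ℂ {v})) := by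
      rw [Submodule.span_le]
      rintro g ⟨P, φ, hP, hφy, hφz, rfl⟩
      have hφV : φ ∈ V.dualAnnihilator := by
        rw [Submodule.mem_dualAnnihilator]
        intro w hw
        rw [← hyzspan] at hw
        have hsub : Submodule.span ℂ ({y, z} : Set (Fin (n+1) → ℂ)) ≤ LinearMap.ker φ := by
          rw [Submodule.span_le]
          rintro w' (rfl | rfl) <;> simp [hφy, hφz]
        exact hsub hw
      have hφx : φ x = 0 := (Submodule.mem_dualAnnihilator φ).1 hφV x hxV
      refine ⟨⟨P * toForm n φ, mem_Sdx_prod n d x hd1 P φ hP hφx⟩, ?_, rfl⟩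
      simp only [SetLike.mem_coe, Submodule.mem_comap]
      rw [hVann] at hφV
      obtain ⟨ψ, hψker, hψeq⟩ := hφV
      have hmem2 : P * toForm n ψ.1 ∈ SdxSubmodule n d x :=
        mem_Sdx_prod n d x hd1 P ψ.1 hP ((mem_KxD_iff n x ψ.1).1 ψ.2)
      have heq2 : (⟨P * toForm n φ, mem_Sdx_prod n d x hd1 P φ hP hφx⟩ :
          SdxSubmodule n d x) = ⟨P * toForm n ψ.1, hmem2⟩ := by
        apply Subtype.ext
        show P * toForm n φ = P * toForm n ψ.1
        rw [← hψeq]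
        rfl
      rw [heq2]
      have := hvprop ⟨P, (MvPolynomial.mem_homogeneousSubmodule _ _).2 hP⟩ ψ
        (LinearMap.mem_ker.1 hψker)
      exact this
    obtain ⟨F', hF'mem, hF'eq⟩ := hsubset hFspan
    have hFF : Submodule.inclusion hIVle F = F' := Subtype.ext hF'eq.symm
    have : ρ F = (NQ n d x T).mkQ F' := by rw [hρdef, LinearMap.comp_apply, hFF]
    rw [this]
    exact hF'mem
  -- kernel of ρ
  have hkerρ : LinearMap.ker ρ = (T ⊓ IVSubmodule n d V).comap (IVSubmodule n d V).subtype := by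
    ext F
    simp only [LinearMap.mem_ker, hρdef, LinearMap.comp_apply, Submodule.mem_comap]
    rw [Submodule.mkQ_apply, Submodule.Quotient.mk_eq_zero, NQ, Submodule.mem_comap]
    constructor
    · intro h
      have h1 := (Submodule.mem_inf.1 h).1
      exact Submodule.mem_inf.2 ⟨h1, F.2⟩
    · intro h
      have h1 := (Submodule.mem_inf.1 h).1
      exact Submodule.mem_inf.2 ⟨h1, hIVle F.2⟩
  -- conclude
  have hrle : LinearMap.range ρ ≤ Submodule.span ℂ {v} := by
    rintro w ⟨F, rfl⟩
    exact hρrange F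
  have e := LinearMap.quotKerEquivRange ρ
  have h1 : Module.finrank ℂ ((IVSubmodule n d V) ⧸ LinearMap.ker ρ)
      = Module.finrank ℂ (LinearMap.range ρ) := LinearEquiv.finrank_eq e
  have h2 : Module.finrank ℂ (LinearMap.range ρ) ≤ Module.finrank ℂ (Submodule.span ℂ {v}) :=
    Submodule.finrank_mono hrle
  have h3 := finrank_span_singleton_le' v
  unfold relCodim
  rw [← hkerρ, h1]
  omega
end

section
/- Let n ≥ 2, d ≥ 1, let x ∈ ℂ^{n+1} be nonzero, and let V ≠ V' be two distinct 2-dimensional linear subspaces of ℂ^{n+1} both containing x. Then I_V(d) + I_{V'}(d) = S^d_x; that is, every homogeneous polynomial of degree d vanishing at x can be written as G + G' with G vanishing identically on V and G' vanishing identically on V'. (Equivalently, the map I_V(d) ⊕ I_{V'}(d) → S^d_x is surjective.) -/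
open MvPolynomial

lemma aux_eval_smul_of_isHomogeneous {N d : ℕ} {F : MvPolynomial (Fin N) ℂ}
    (hF : F.IsHomogeneous d) (c : ℂ) (u : Fin N → ℂ) :
    MvPolynomial.eval (c • u) F = c ^ d * MvPolynomial.eval u F := by
  rw [eval_eq, eval_eq, Finset.mul_sum]
  refine Finset.sum_congr rfl fun m hm => ?_
  have hd : ∑ i ∈ m.support, m i = d := by
    have h := hF (mem_support_iff.mp hm)
    rw [← h, Finsupp.weight_apply, Finsupp.sum]
    simp only [Pi.one_apply, smul_eq_mul, mul_one]
  have hprod : (∏ i ∈ m.support, (c • u) i ^ m i) = c ^ d * ∏ i ∈ m.support, u i ^ m i := by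
    calc (∏ i ∈ m.support, (c • u) i ^ m i) = ∏ i ∈ m.support, (c ^ m i * u i ^ m i) := by
          refine Finset.prod_congr rfl fun i _ => ?_
          simp [mul_pow]
      _ = (∏ i ∈ m.support, c ^ m i) * ∏ i ∈ m.support, u i ^ m i := Finset.prod_mul_distrib
      _ = c ^ d * ∏ i ∈ m.support, u i ^ m i := by rw [Finset.prod_pow_eq_pow_sum, hd]
  rw [hprod]; ring

/-- for two distinct lines through `x`, i.e. distinct 2-planes `V ≠ V'` in
`ℂ^{n+1}` containing a nonzero `x`, one has `I_V(d) + I_{V'}(d) = S^d_x`: every degree-`d`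
form vanishing at `x` is a sum `G + G'` with `G` vanishing on `V` and `G'` vanishing on `V'`. -/
theorem ideal_sum_of_two_lines_is_Sdx
    (n d : ℕ) (hn : 2 ≤ n) (hd : 1 ≤ d)
    (x : Fin (n + 1) → ℂ) (hx : x ≠ 0)
    (V V' : Submodule ℂ (Fin (n + 1) → ℂ))
    (hV : Module.finrank ℂ V = 2) (hV' : Module.finrank ℂ V' = 2)
    (hne : V ≠ V') (hxV : x ∈ V) (hxV' : x ∈ V')
    (F : MvPolynomial (Fin (n + 1)) ℂ) (hF : F.IsHomogeneous d)
    (hFx : MvPolynomial.eval x F = 0) :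
    ∃ G G' : MvPolynomial (Fin (n + 1)) ℂ,
      G.IsHomogeneous d ∧ (∀ u ∈ V, MvPolynomial.eval u G = 0) ∧
      G'.IsHomogeneous d ∧ (∀ u ∈ V', MvPolynomial.eval u G' = 0) ∧
      F = G + G' := by
  -- `V` is not contained in `V'`
  have hVle : ¬ V ≤ V' := by
    intro h
    exact hne (Submodule.eq_of_le_of_finrank_le h (by rw [hV, hV']))
  obtain ⟨y, hyV, hyV'⟩ := SetLike.not_le_iff_exists.mp hVle
  -- a functional `L` vanishing on `V'` with `L y = 1`
  obtain ⟨f, hf0, hfbot⟩ := Submodule.exists_dual_map_eq_bot_of_notMem hyV' inferInstance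
  have hfV' : ∀ u ∈ V', f u = 0 := by
    intro u hu
    have : f u ∈ V'.map f := Submodule.mem_map_of_mem hu
    rw [hfbot] at this
    exact this
  set L : Module.Dual ℂ (Fin (n + 1) → ℂ) := (f y)⁻¹ • f with hLdef
  have hLy : L y = 1 := by simp [hLdef, inv_mul_cancel₀ hf0]
  have hLV' : ∀ u ∈ V', L u = 0 := by
    intro u hu; simp [hLdef, hfV' u hu]
  have hLx : L x = 0 := hLV' x hxV'
  -- `x ∉ span {y}`
  have hxny : x ∉ Submodule.span ℂ ({y} : Set (Fin (n + 1) → ℂ)) := by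
    intro hmem
    rw [Submodule.mem_span_singleton] at hmem
    obtain ⟨c, hc⟩ := hmem
    have hc0 : c ≠ 0 := by rintro rfl; simp at hc; exact hx hc.symm
    have : y = c⁻¹ • x := by rw [← hc, smul_smul, inv_mul_cancel₀ hc0, one_smul]
    exact hyV' (this ▸ V'.smul_mem _ hxV')
  -- a functional `μ` vanishing on `y` with `μ x = 1`
  obtain ⟨g, hg0, hgbot⟩ := Submodule.exists_dual_map_eq_bot_of_notMem hxny inferInstance
  have hgy : g y = 0 := by
    have : g y ∈ (Submodule.span ℂ ({y} : Set (Fin (n + 1) → ℂ))).map g :=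
      Submodule.mem_map_of_mem (Submodule.mem_span_singleton_self y)
    rw [hgbot] at this
    exact this
  set μ : Module.Dual ℂ (Fin (n + 1) → ℂ) := (g x)⁻¹ • g with hμdef
  have hμx : μ x = 1 := by simp [hμdef, inv_mul_cancel₀ hg0]
  have hμy : μ y = 0 := by simp [hμdef, hgy]
  -- linear polynomials realizing `μ` and `L`
  set e : Fin (n + 1) → (Fin (n + 1) → ℂ) := fun i j => if i = j then 1 else 0 with hedef
  set Pμ : MvPolynomial (Fin (n + 1)) ℂ := ∑ j, MvPolynomial.C (μ (e j)) * MvPolynomial.X j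
    with hPμdef
  set Pℓ : MvPolynomial (Fin (n + 1)) ℂ := ∑ j, MvPolynomial.C (L (e j)) * MvPolynomial.X j
    with hPℓdef
  have hevalPμ : ∀ u, MvPolynomial.eval u Pμ = μ u := by
    intro u
    rw [hPμdef, map_sum, LinearMap.pi_apply_eq_sum_univ μ u]
    refine Finset.sum_congr rfl fun j _ => ?_
    simp [mul_comm, hedef]
  have hevalPℓ : ∀ u, MvPolynomial.eval u Pℓ = L u := by
    intro u
    rw [hPℓdef, map_sum, LinearMap.pi_apply_eq_sum_univ L u]
    refine Finset.sum_congr rfl fun j _ => ?_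
    simp [mul_comm, hedef]
  -- the substitution
  set σs : Fin (n + 1) → MvPolynomial (Fin (n + 1)) ℂ :=
    fun i => MvPolynomial.C (x i) * Pμ + MvPolynomial.C (y i) * Pℓ with hσdef
  have hPμhom : Pμ.IsHomogeneous 1 := by
    rw [hPμdef]
    exact IsHomogeneous.sum _ _ _ fun j _ => isHomogeneous_C_mul_X _ j
  have hPℓhom : Pℓ.IsHomogeneous 1 := by
    rw [hPℓdef]
    exact IsHomogeneous.sum _ _ _ fun j _ => isHomogeneous_C_mul_X _ j
  have hσhom : ∀ i, (σs i).IsHomogeneous 1 := fun i =>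
    (hPμhom.C_mul _).add (hPℓhom.C_mul _)
  set G' : MvPolynomial (Fin (n + 1)) ℂ := MvPolynomial.aeval σs F with hG'def
  have hG'hom : G'.IsHomogeneous d := by
    have := hF.eval₂ (algebraMap ℂ (MvPolynomial (Fin (n + 1)) ℂ)) σs
      (fun r => isHomogeneous_C _ _) hσhom
    rw [hG'def, aeval_def]
    rwa [one_mul] at this
  -- evaluation of G'
  have keval : ∀ u, MvPolynomial.eval u G' = MvPolynomial.eval (μ u • x + L u • y) F := by
    intro u
    rw [hG'def, aeval_def, eval_eval₂]
    have h1 : (MvPolynomial.eval u).comp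
        (algebraMap ℂ (MvPolynomial (Fin (n + 1)) ℂ)) = RingHom.id ℂ := by
      ext r
      simp [MvPolynomial.algebraMap_eq]
    rw [h1, eval₂_id]
    have hpt : (fun s => MvPolynomial.eval u (σs s)) = μ u • x + L u • y := by
      funext i
      simp only [hσdef, map_add, map_mul, eval_C, hevalPμ u, hevalPℓ u, Pi.add_apply,
        Pi.smul_apply, smul_eq_mul]
      ring
    rw [hpt]
  -- G' vanishes on V'
  have hG'V' : ∀ u ∈ V', MvPolynomial.eval u G' = 0 := by
    intro u hu
    rw [keval u, hLV' u hu, zero_smul, add_zero,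
      aux_eval_smul_of_isHomogeneous hF, hFx, mul_zero]
  -- V = span {x, y}
  have hindep : LinearIndependent ℂ ![x, y] := by
    refine LinearIndependent.pair_iff.2 fun s t hst => ?_
    constructor
    · have := congrArg μ hst
      simpa [hμx, hμy] using this
    · have := congrArg L hst
      simpa [hLx, hLy] using this
  have hrange : Set.range ![x, y] = ({x, y} : Set (Fin (n + 1) → ℂ)) := by
    ext v
    simp only [Set.mem_range, Fin.exists_fin_two, Matrix.cons_val_zero, Matrix.cons_val_one,
      Matrix.head_cons, Set.mem_insert_iff, Set.mem_singleton_iff]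
    tauto
  have hspanle : Submodule.span ℂ ({x, y} : Set (Fin (n + 1) → ℂ)) ≤ V := by
    rw [Submodule.span_le]
    rintro v (rfl | rfl)
    · exact hxV
    · exact hyV
  have hspaneq : Submodule.span ℂ ({x, y} : Set (Fin (n + 1) → ℂ)) = V := by
    refine Submodule.eq_of_le_of_finrank_le hspanle ?_
    rw [hV, ← hrange, finrank_span_eq_card hindep]
    simp
  -- conclusion
  refine ⟨F - G', G', hF.sub hG'hom, ?_, hG'hom, hG'V', by ring⟩
  intro u hu
  rw [← hspaneq] at hu
  obtain ⟨a, b, hab⟩ := Submodule.mem_span_pair.mp hu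
  have hμu : μ u = a := by
    rw [← hab]; simp [hμx, hμy]
  have hLu : L u = b := by
    rw [← hab]; simp [hLx, hLy]
  rw [map_sub, keval u, hμu, hLu, hab, sub_self]
end

section
/- Let n ≥ 1, d ≥ 1 and let r be an integer with 1 ≤ r ≤ d+1. Let x, v ∈ ℂ^{n+1} be linearly independent. Then the set of F ∈ S^d such that the univariate polynomial t ↦ F(x + t·v) vanishes to order at least r at t = 0 is a linear subspace of S^d of codimension exactly r, i.e., of dimension binom(n+d, n) − r. (This is the statement that tangency of order at least r of a line with a degree-d hypersurface at a point imposes exactly r independent linear conditions on the defining polynomial; it computes the fibres of the projection of the incidence variety Δ̃_r to the flag variety of pointed lines.) -/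
open MvPolynomial

theorem aux_finrank_homog (n d : ℕ) :
    Module.finrank ℂ (homogeneousSubmodule (Fin (n+1)) ℂ d) = Nat.choose (n + d) n := by
  have hset : homogeneousSubmodule (Fin (n+1)) ℂ d =
      restrictSupport ℂ {s : Fin (n+1) →₀ ℕ | s.degree = d} :=
    homogeneousSubmodule_eq_finsupp_supported (Fin (n+1)) ℂ d
  have e : Sym (Fin (n+1)) d ≃ {s : Fin (n+1) →₀ ℕ | s.degree = d} :=
    (Sym.equivNatSum (Fin (n+1)) d).trans (Equiv.subtypeEquivRight (by
      intro s
      simp [Finsupp.degree, Finsupp.sum]; rfl))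
  haveI : Fintype {s : Fin (n+1) →₀ ℕ | s.degree = d} := Fintype.ofEquiv _ e
  rw [hset, Module.finrank_eq_card_basis (basisRestrictSupport ℂ _)]
  rw [← Fintype.card_congr e, Sym.card_sym_eq_choose]
  simp only [Fintype.card_fin]
  rw [show n + 1 + d - 1 = n + d by omega, Nat.choose_symm_add]

theorem aux_findim_homog (n d : ℕ) :
    FiniteDimensional ℂ (homogeneousSubmodule (Fin (n+1)) ℂ d) := by
  have hset : homogeneousSubmodule (Fin (n+1)) ℂ d =
      restrictSupport ℂ {s : Fin (n+1) →₀ ℕ | s.degree = d} :=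
    homogeneousSubmodule_eq_finsupp_supported (Fin (n+1)) ℂ d
  have e : Sym (Fin (n+1)) d ≃ {s : Fin (n+1) →₀ ℕ | s.degree = d} :=
    (Sym.equivNatSum (Fin (n+1)) d).trans (Equiv.subtypeEquivRight (by
      intro s
      simp [Finsupp.degree, Finsupp.sum]; rfl))
  haveI : Fintype {s : Fin (n+1) →₀ ℕ | s.degree = d} := Fintype.ofEquiv _ e
  rw [hset]
  exact Module.Finite.of_basis (basisRestrictSupport ℂ _)

theorem aux_exists_dual (n : ℕ) (x v : Fin (n + 1) → ℂ)
    (hxv : LinearIndependent ℂ ![x, v]) :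
    ∃ a b : Fin (n+1) → ℂ, (∑ i, a i * x i) = 1 ∧ (∑ i, a i * v i) = 0 ∧
      (∑ i, b i * x i) = 0 ∧ (∑ i, b i * v i) = 1 := by
  set f : (Fin 2 → ℂ) →ₗ[ℂ] (Fin (n+1) → ℂ) :=
    { toFun := fun c => c 0 • x + c 1 • v
      map_add' := by intro c c'; simp [add_smul]; try module
      map_smul' := by intro m c; simp [smul_smul]; try module } with hf
  have hinj : Function.Injective f := by
    rw [← LinearMap.ker_eq_bot, LinearMap.ker_eq_bot']
    intro c hc
    have h2 := Fintype.linearIndependent_iff.mp hxv c (by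
      rw [Fin.sum_univ_two]
      simpa [hf] using hc)
    funext i
    fin_cases i <;> simp [h2 0, h2 1]
  obtain ⟨g, hg⟩ := LinearMap.exists_leftInverse_of_injective f (LinearMap.ker_eq_bot.mpr hinj)
  have hgx : g x = Pi.single 0 1 := by
    have : f (Pi.single 0 1) = x := by simp [hf]
    rw [← this, ← LinearMap.comp_apply, hg, LinearMap.id_apply]
  have hgv : g v = Pi.single 1 1 := by
    have : f (Pi.single 1 1) = v := by simp [hf]
    rw [← this, ← LinearMap.comp_apply, hg, LinearMap.id_apply]
  have hsingle : ∀ i : Fin (n+1), (fun j => if i = j then (1:ℂ) else 0) = Pi.single i 1 := by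
    intro i; funext j; simp [Pi.single_apply, eq_comm]
  refine ⟨fun i => g (Pi.single i 1) 0, fun i => g (Pi.single i 1) 1, ?_, ?_, ?_, ?_⟩ <;>
  · have key : ∀ w : Fin (n+1) → ℂ, ∀ k : Fin 2,
        (∑ i, g (Pi.single i 1) k * w i) = g w k := by
      intro w k
      conv_rhs => rw [pi_eq_sum_univ w, map_sum]
      simp_rw [hsingle]
      simp [mul_comm]
    rw [key]
    simp [hgx, hgv]

theorem aux_line_eval (n : ℕ) (x v a : Fin (n+1) → ℂ) (c0 c1 : ℂ)
    (ha1 : (∑ i, a i * x i) = c0) (ha2 : (∑ i, a i * v i) = c1) :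
    (MvPolynomial.aeval (fun i => Polynomial.C (x i) + Polynomial.C (v i) * Polynomial.X))
      (∑ i, C (a i) * X i) = Polynomial.C c0 + Polynomial.C c1 * Polynomial.X := by
  rw [map_sum]
  simp only [map_mul, aeval_C, aeval_X, Polynomial.algebraMap_eq]
  simp_rw [mul_add, ← mul_assoc, ← Polynomial.C_mul, Finset.sum_add_distrib,
    ← Finset.sum_mul, ← map_sum, ha1, ha2]

theorem aux_line_homog (n : ℕ) (a : Fin (n+1) → ℂ) :
    (∑ i, C (a i) * X i : MvPolynomial (Fin (n+1)) ℂ).IsHomogeneous 1 :=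
  IsHomogeneous.sum _ _ _ fun i _ => by
    simpa using (isHomogeneous_C _ (a i)).mul (isHomogeneous_X ℂ i)

/-- tangency of order at least `r` (with `1 ≤ r ≤ d+1`) of the line through
`[x]` with direction `v` imposes exactly `r` independent linear conditions on degree-`d`
forms: the set of `F ∈ S^d` with `t ↦ F(x + t v)` vanishing to order at least `r` at `0`
is a linear subspace of dimension `binom(n+d, n) − r`. -/
theorem contact_conditions_subspace_dimension
    (n d r : ℕ) (hn : 1 ≤ n) (hd : 1 ≤ d) (hr1 : 1 ≤ r) (hr2 : r ≤ d + 1)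
    (x v : Fin (n + 1) → ℂ) (hxv : LinearIndependent ℂ ![x, v]) :
    ∃ T : Submodule ℂ (MvPolynomial (Fin (n + 1)) ℂ),
      (T : Set (MvPolynomial (Fin (n + 1)) ℂ)) =
        {F | F.IsHomogeneous d ∧ ∀ j < r,
          (MvPolynomial.aeval
            (fun i => Polynomial.C (x i) + Polynomial.C (v i) * Polynomial.X) F).coeff j = 0} ∧
      Module.finrank ℂ T = Nat.choose (n + d) n - r := by
  classical
  set line : Fin (n+1) → Polynomial ℂ :=
    fun i => Polynomial.C (x i) + Polynomial.C (v i) * Polynomial.X with hline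
  set H := homogeneousSubmodule (Fin (n+1)) ℂ d with hH
  set φ : MvPolynomial (Fin (n + 1)) ℂ →ₗ[ℂ] (Fin r → ℂ) :=
    LinearMap.pi fun j : Fin r =>
      (Polynomial.lcoeff ℂ (j : ℕ)).comp (MvPolynomial.aeval line).toLinearMap with hφ
  have hφ_apply : ∀ F (j : Fin r),
      φ F j = (MvPolynomial.aeval line F).coeff (j : ℕ) := fun F j => rfl
  refine ⟨H ⊓ LinearMap.ker φ, ?_, ?_⟩
  · ext F
    simp only [SetLike.mem_coe, Submodule.mem_inf, LinearMap.mem_ker, Set.mem_setOf_eq,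
      hH, mem_homogeneousSubmodule]
    refine and_congr_right fun _ => ?_
    rw [_root_.funext_iff]
    constructor
    · intro h j hj
      simpa [hφ_apply] using h ⟨j, hj⟩
    · intro h j
      simpa [hφ_apply] using h (j : ℕ) j.2
  · haveI : FiniteDimensional ℂ H := aux_findim_homog n d
    set ψ : H →ₗ[ℂ] (Fin r → ℂ) := φ.comp H.subtype with hψ
    -- construct preimages showing surjectivity of ψ
    obtain ⟨a, b, ha1, ha2, hb1, hb2⟩ := aux_exists_dual n x v hxv
    set A : MvPolynomial (Fin (n+1)) ℂ := ∑ i, C (a i) * X i with hA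
    set B : MvPolynomial (Fin (n+1)) ℂ := ∑ i, C (b i) * X i with hB
    have hAline : MvPolynomial.aeval line A = 1 := by
      rw [hA, aux_line_eval n x v a 1 0 ha1 ha2]; simp
    have hBline : MvPolynomial.aeval line B = Polynomial.X := by
      rw [hB, aux_line_eval n x v b 0 1 hb1 hb2]; simp
    set G : Fin r → MvPolynomial (Fin (n+1)) ℂ :=
      fun j => A ^ (d - (j : ℕ)) * B ^ (j : ℕ) with hG
    have hGhom : ∀ j : Fin r, (G j).IsHomogeneous d := by
      intro j
      have hj : (j : ℕ) ≤ d := by have := j.2; omega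
      have := ((aux_line_homog n a).pow (d - (j : ℕ))).mul ((aux_line_homog n b).pow (j : ℕ))
      rwa [show 1 * (d - (j : ℕ)) + 1 * (j : ℕ) = d by omega] at this
    have hGeval : ∀ j : Fin r,
        MvPolynomial.aeval line (G j) = Polynomial.X ^ (j : ℕ) := by
      intro j
      rw [hG]
      simp only [map_mul, map_pow, hAline, hBline, one_pow, one_mul]
    have hφG : ∀ j : Fin r, φ (G j) = Pi.single j 1 := by
      intro j
      funext k
      rw [hφ_apply, hGeval, Polynomial.coeff_X_pow, Pi.single_apply]
      simp [Fin.val_eq_val, eq_comm]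
    have hsurj : LinearMap.range ψ = ⊤ := by
      rw [Submodule.eq_top_iff']
      intro c
      refine ⟨⟨∑ j, c j • G j, ?_⟩, ?_⟩
      · exact Submodule.sum_mem _ fun j _ => Submodule.smul_mem _ _ (hGhom j)
      · show φ (∑ j, c j • G j) = c
        rw [map_sum]
        simp_rw [map_smul, hφG]
        funext k
        simp [Pi.single_apply]
    have hker : H ⊓ LinearMap.ker φ = Submodule.map H.subtype (LinearMap.ker ψ) := by
      rw [hψ, LinearMap.ker_comp, Submodule.map_comap_subtype]
    have hrn := LinearMap.finrank_range_add_finrank_ker ψ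
    rw [hsurj, finrank_top] at hrn
    have hHfin : Module.finrank ℂ H = Nat.choose (n + d) n := aux_finrank_homog n d
    have hpi : Module.finrank ℂ (Fin r → ℂ) = r := by simp
    rw [hker]
    rw [Submodule.finrank_map_subtype_eq]
    omega
end

section
/- Let n ≥ 2, d ≥ 1, and let r be an integer with 1 ≤ r ≤ n. For every homogeneous polynomial F of degree d in X_0, …, X_n and every nonzero x ∈ ℂ^{n+1} with F(x) = 0, there exists v ∈ ℂ^{n+1} linearly independent from x such that the univariate polynomial t ↦ F(x + t·v) vanishes to order at least r at t = 0. (Through every point of every degree-d hypersurface in ℙ^n there passes a line having contact of order at least r with the hypersurface at that point, provided r ≤ n; this is the surjectivity of the projection ρ_r : Δ̃_r → X for r ≤ n.) -/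
open MvPolynomial

noncomputable section OscAux
open Module
variable {n : ℕ}

def SS (n m : ℕ) : Submodule ℂ (MvPolynomial (Fin (n+1)) ℂ) :=
  homogeneousSubmodule (Fin (n+1)) ℂ m

instance (n m : ℕ) : FiniteDimensional ℂ (SS n m) :=
  Submodule.finiteDimensional_of_le (S₂ := restrictTotalDegree (Fin (n+1)) ℂ m)
    (fun p hp => (mem_restrictTotalDegree _ _ _).mpr
      (((mem_homogeneousSubmodule _ _).mp hp).totalDegree_le))

def part (n : ℕ) (g : MvPolynomial (Fin (n+1)) ℂ) (dg m : ℕ) :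
    Submodule ℂ (MvPolynomial (Fin (n+1)) ℂ) :=
  ⨆ (e : ℕ) (_ : dg + e = m), (SS n e).map (LinearMap.mulLeft ℂ g)

def AA (n : ℕ) (fe : ℕ → MvPolynomial (Fin (n+1)) ℂ) (dde : ℕ → ℕ) :
    ℕ → ℕ → Submodule ℂ (MvPolynomial (Fin (n+1)) ℂ)
  | 0, _ => ⊥
  | (i+1), m => AA n fe dde i m ⊔ part n (fe i) (dde i) m

lemma map_mulL_SS {g : MvPolynomial (Fin (n+1)) ℂ} {dg : ℕ} (hg : g.IsHomogeneous dg) (e : ℕ) :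
    (SS n e).map (LinearMap.mulLeft ℂ g) ≤ SS n (dg + e) := by
  rintro _ ⟨s, hs, rfl⟩
  exact (mem_homogeneousSubmodule _ _).mpr
    (hg.mul ((mem_homogeneousSubmodule _ _).mp hs))

lemma part_le_SS {g : MvPolynomial (Fin (n+1)) ℂ} {dg : ℕ} (hg : g.IsHomogeneous dg) (m : ℕ) :
    part n g dg m ≤ SS n m := by
  refine iSup₂_le fun e he => ?_
  subst he; exact map_mulL_SS hg e

lemma part_eq_bot {g : MvPolynomial (Fin (n+1)) ℂ} {dg m : ℕ} (h : m < dg) :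
    part n g dg m = ⊥ := by
  refine le_bot_iff.mp (iSup₂_le fun e he => absurd he (by omega))

lemma part_eq_map {g : MvPolynomial (Fin (n+1)) ℂ} {dg m : ℕ} (h : dg ≤ m) :
    part n g dg m = (SS n (m - dg)).map (LinearMap.mulLeft ℂ g) := by
  refine le_antisymm (iSup₂_le fun e he => ?_) (le_iSup₂_of_le (m - dg) (by omega) le_rfl)
  obtain rfl : e = m - dg := by omega
  exact le_rfl

lemma AA_le_SS {fe : ℕ → MvPolynomial (Fin (n+1)) ℂ} {dde : ℕ → ℕ} {i : ℕ}
    (hg : ∀ i' < i, (fe i').IsHomogeneous (dde i')) (m : ℕ) :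
    AA n fe dde i m ≤ SS n m := by
  induction i with
  | zero => exact bot_le
  | succ i ih =>
      exact sup_le (ih fun i' h => hg i' (by omega))
        (part_le_SS (hg i (by omega)) m)

lemma AA_mono {fe : ℕ → MvPolynomial (Fin (n+1)) ℂ} {dde : ℕ → ℕ} {i i' : ℕ}
    (h : i ≤ i') (m : ℕ) : AA n fe dde i m ≤ AA n fe dde i' m := by
  induction i' with
  | zero =>
      obtain rfl : i = 0 := by omega
      exact le_rfl
  | succ j ih =>
      rcases Nat.lt_or_ge i (j+1) with h' | h'
      · exact le_trans (ih (by omega)) le_sup_left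
      · obtain rfl : i = j + 1 := by omega
        exact le_rfl

lemma map_mulL_comm (g h : MvPolynomial (Fin (n+1)) ℂ)
    (W : Submodule ℂ (MvPolynomial (Fin (n+1)) ℂ)) :
    (W.map (LinearMap.mulLeft ℂ h)).map (LinearMap.mulLeft ℂ g)
      = (W.map (LinearMap.mulLeft ℂ g)).map (LinearMap.mulLeft ℂ h) := by
  rw [← Submodule.map_comp, ← Submodule.map_comp, ← LinearMap.mulLeft_mul,
    ← LinearMap.mulLeft_mul, mul_comm]

lemma map_mulL_AA {fe : ℕ → MvPolynomial (Fin (n+1)) ℂ} {dde : ℕ → ℕ} {i : ℕ}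
    {g : MvPolynomial (Fin (n+1)) ℂ} {dg : ℕ} (hgh : g.IsHomogeneous dg) (m : ℕ) :
    (AA n fe dde i m).map (LinearMap.mulLeft ℂ g) ≤ AA n fe dde i (dg + m) := by
  induction i with
  | zero => simp [AA]
  | succ i ih =>
      rw [AA, AA, Submodule.map_sup]
      refine sup_le (le_trans ih le_sup_left) (le_trans ?_ le_sup_right)
      rw [part, Submodule.map_iSup]
      refine iSup_le fun e => ?_
      rw [Submodule.map_iSup]
      refine iSup_le fun he => ?_
      rw [map_mulL_comm]
      refine le_trans ?_ (le_iSup₂_of_le (dg + e) (by omega) le_rfl)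
      exact Submodule.map_mono (map_mulL_SS hgh e)

def bb (n : ℕ) (fe : ℕ → MvPolynomial (Fin (n+1)) ℂ) (dde : ℕ → ℕ) (i m : ℕ) : ℕ :=
  finrank ℂ (SS n m) - finrank ℂ (AA n fe dde i m)

lemma finrank_part {g : MvPolynomial (Fin (n+1)) ℂ} {dg m : ℕ}
    (hg : g ≠ 0) (h : dg ≤ m) :
    finrank ℂ ((SS n (m - dg)).map (LinearMap.mulLeft ℂ g)) = finrank ℂ (SS n (m - dg)) :=
  (LinearEquiv.finrank_eq (Submodule.equivMapOfInjective _
    (fun a b hab => mul_left_cancel₀ hg hab) (SS n (m - dg)))).symm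

lemma bb_rec {fe : ℕ → MvPolynomial (Fin (n+1)) ℂ} {dde : ℕ → ℕ} {i : ℕ}
    (hg : ∀ i' < i + 1, (fe i').IsHomogeneous (dde i')) (hne : fe i ≠ 0) (m : ℕ) :
    bb n fe dde i m ≤ bb n fe dde (i+1) m + bb n fe dde i (m - dde i) := by
  rcases Nat.lt_or_ge m (dde i) with h | h
  · have : AA n fe dde (i+1) m = AA n fe dde i m := by
      rw [AA, part_eq_bot h, sup_bot_eq]
    unfold bb
    rw [this]
    omega
  · have hgi : ∀ i' < i, (fe i').IsHomogeneous (dde i') := fun i' h' => hg i' (by omega)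
    have hfi : (fe i).IsHomogeneous (dde i) := hg i (by omega)
    set A := AA n fe dde i m with hA
    set Am := AA n fe dde i (m - dde i) with hAm
    set W := SS n (m - dde i) with hW
    set Xp := W.map (LinearMap.mulLeft ℂ (fe i)) with hXp
    have hAA1 : AA n fe dde (i+1) m = A ⊔ Xp := by rw [AA, part_eq_map h]
    have hALE : A ≤ SS n m := AA_le_SS hgi m
    have hAmLE : Am ≤ W := AA_le_SS hgi (m - dde i)
    have hXLE : Xp ≤ SS n m := by
      rw [hXp, hW, ← part_eq_map h]
      exact part_le_SS hfi m
    haveI : FiniteDimensional ℂ A := Submodule.finiteDimensional_of_le hALE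
    haveI : FiniteDimensional ℂ Xp := Submodule.finiteDimensional_of_le hXLE
    haveI : FiniteDimensional ℂ Am := Submodule.finiteDimensional_of_le
      (le_trans hAmLE le_rfl)
    have e1 : finrank ℂ (A ⊔ Xp : Submodule ℂ _) + finrank ℂ (A ⊓ Xp : Submodule ℂ _)
        = finrank ℂ A + finrank ℂ Xp := Submodule.finrank_sup_add_finrank_inf_eq A Xp
    have e2 : finrank ℂ Xp = finrank ℂ W := by
      rw [hXp, hW, finrank_part hne h]
    have e3 : Am.map (LinearMap.mulLeft ℂ (fe i)) ≤ A ⊓ Xp := by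
      refine le_inf ?_ (Submodule.map_mono hAmLE)
      refine le_trans (map_mulL_AA hfi (m - dde i)) ?_
      rw [hA]
      have : dde i + (m - dde i) = m := by omega
      rw [this]
    have e4 : finrank ℂ Am ≤ finrank ℂ (A ⊓ Xp : Submodule ℂ _) := by
      have := finrank_part (n := n) (g := fe i) (dg := 0) (m := 0) hne (le_refl 0)
      calc finrank ℂ Am
          = finrank ℂ (Am.map (LinearMap.mulLeft ℂ (fe i))) :=
            LinearEquiv.finrank_eq (Submodule.equivMapOfInjective _
              (fun a b hab => mul_left_cancel₀ hne hab) Am)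
        _ ≤ finrank ℂ (A ⊓ Xp : Submodule ℂ _) := Submodule.finrank_mono e3
    have b1 : finrank ℂ A ≤ finrank ℂ (SS n m) := Submodule.finrank_mono hALE
    have b2 : finrank ℂ (A ⊔ Xp : Submodule ℂ _) ≤ finrank ℂ (SS n m) :=
      Submodule.finrank_mono (sup_le hALE hXLE)
    have b3 : finrank ℂ Am ≤ finrank ℂ W := Submodule.finrank_mono hAmLE
    unfold bb
    rw [hAA1]
    rw [← hA, ← hAm, ← hW]
    omega

lemma bb_sum {fe : ℕ → MvPolynomial (Fin (n+1)) ℂ} {dde : ℕ → ℕ} {i : ℕ}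
    (hg : ∀ i' < i + 1, (fe i').IsHomogeneous (dde i')) (hne : fe i ≠ 0)
    (hd : 1 ≤ dde i) (m : ℕ) :
    bb n fe dde i m ≤ ∑ j ∈ Finset.range (m / dde i + 1), bb n fe dde (i+1) (m - j * dde i) := by
  induction m using Nat.strong_induction_on with
  | _ m ih =>
    rcases Nat.lt_or_ge m (dde i) with h | h
    · have h0 : m / dde i = 0 := Nat.div_eq_of_lt h
      have : AA n fe dde (i+1) m = AA n fe dde i m := by
        rw [AA, part_eq_bot h, sup_bot_eq]
      rw [h0, Finset.sum_range_one, Nat.zero_mul, Nat.sub_zero]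
      unfold bb
      rw [this]
    · have hrec := bb_rec hg hne m
      have hlt : m - dde i < m := by omega
      have hsum := ih (m - dde i) hlt
      have hdiv : m / dde i = (m - dde i) / dde i + 1 := by
        rw [Nat.div_eq_sub_div (by omega) h]
      have hre : ∀ j : ℕ, m - dde i - j * dde i = m - (j + 1) * dde i := by
        intro j
        have : (j + 1) * dde i = dde i + j * dde i := by ring
        omega
      calc bb n fe dde i m
          ≤ bb n fe dde (i+1) m + bb n fe dde i (m - dde i) := hrec
        _ ≤ bb n fe dde (i+1) m
            + ∑ j ∈ Finset.range ((m - dde i) / dde i + 1), bb n fe dde (i+1) (m - dde i - j * dde i) :=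
            Nat.add_le_add_left hsum _
        _ = ∑ j ∈ Finset.range (m / dde i + 1), bb n fe dde (i+1) (m - j * dde i) := by
            have hco : ∀ j : ℕ, bb n fe dde (i+1) (m - dde i - j * dde i)
                = bb n fe dde (i+1) (m - (j+1) * dde i) := fun j => by rw [hre]
            conv_rhs => rw [hdiv, Finset.sum_range_succ']
            rw [Finset.sum_congr rfl fun j _ => hco j, Nat.zero_mul, Nat.sub_zero,
              Nat.add_comm]

lemma hc_mul_homog (h : MvPolynomial (Fin (n+1)) ℂ) {f : MvPolynomial (Fin (n+1)) ℂ} {d : ℕ}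
    (hf : f.IsHomogeneous d) (m : ℕ) :
    homogeneousComponent m (h * f)
      = if d ≤ m then homogeneousComponent (m - d) h * f else 0 := by
  induction h using MvPolynomial.induction_on' with
  | monomial u a =>
      have hm : (monomial u a * f).IsHomogeneous (u.degree + d) :=
        (isHomogeneous_monomial a rfl).mul hf
      rw [homogeneousComponent_of_mem ((mem_homogeneousSubmodule _ _).mpr hm),
        homogeneousComponent_of_mem
          ((mem_homogeneousSubmodule _ _).mpr (isHomogeneous_monomial a rfl))]
      by_cases h1 : m = u.degree + d
      · subst h1
        rw [if_pos rfl, if_pos (by omega : d ≤ u.degree + d),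
          if_pos (by omega : u.degree + d - d = u.degree)]
      · rw [if_neg h1]
        by_cases h2 : d ≤ m
        · rw [if_pos h2, if_neg (by omega : ¬ m - d = u.degree), zero_mul]
        · rw [if_neg h2]
  | add p q hp hq =>
      rw [add_mul, map_add, hp, hq]
      split_ifs
      · rw [map_add, add_mul]
      · rw [add_zero]

lemma span_homog_mem_AA {k : ℕ} (f : Fin k → MvPolynomial (Fin (n+1)) ℂ) (dd : Fin k → ℕ)
    (hhom : ∀ i, (f i).IsHomogeneous (dd i)) {g : MvPolynomial (Fin (n+1)) ℂ} {m : ℕ}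
    (hg : g ∈ Ideal.span (Set.range f)) (hgm : g.IsHomogeneous m) :
    g ∈ AA n (fun i => if h : i < k then f ⟨i,h⟩ else 0)
        (fun i => if h : i < k then dd ⟨i,h⟩ else 1) k m := by
  set fe := fun i => if h : i < k then f ⟨i,h⟩ else 0 with hfe
  set dde := fun i => if h : i < k then dd ⟨i,h⟩ else 1 with hdde
  obtain ⟨c, hc⟩ := Ideal.mem_span_range_iff_exists_fun.mp hg
  have hgdec : g = ∑ i : Fin k, homogeneousComponent m (c i * f i) := by
    rw [← map_sum, hc,
      homogeneousComponent_of_mem ((mem_homogeneousSubmodule _ _).mpr hgm), if_pos rfl]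
  rw [hgdec]
  refine Submodule.sum_mem _ fun i _ => ?_
  rw [hc_mul_homog (c i) (hhom i) m]
  split_ifs with hle
  · have hmem : homogeneousComponent (m - dd i) (c i) * f i
        ∈ part n (fe i.val) (dde i.val) m := by
      have hfei : fe i.val = f i := by
        rw [hfe]; simp [i.isLt]
      have hddei : dde i.val = dd i := by
        rw [hdde]; simp [i.isLt]
      rw [hfei, hddei, part]
      refine Submodule.mem_iSup_of_mem (m - dd i) ?_
      refine Submodule.mem_iSup_of_mem (by omega) ?_
      rw [mul_comm]
      exact Submodule.mem_map_of_mem (homogeneousComponent_mem _ _)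
    have hstep : part n (fe i.val) (dde i.val) m ≤ AA n fe dde k m := by
      refine le_trans le_sup_right (AA_mono (by omega : i.val + 1 ≤ k) m)
    exact hstep hmem
  · exact Submodule.zero_mem _

lemma degree_eq_sum_univ {N : ℕ} (d : Fin N →₀ ℕ) : d.degree = ∑ i, d i :=
  Finset.sum_subset (Finset.subset_univ _)
    (fun i _ hi => Finsupp.notMem_support_iff.mp hi)

lemma finrank_SS_lb (n q : ℕ) : (q+1)^n ≤ finrank ℂ (SS n (n*q)) := by
  set μ : (Fin n → Fin (q+1)) → (Fin (n+1) →₀ ℕ) := fun c =>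
    Finsupp.equivFunOnFinite.symm
      (fun j => Fin.cases (n*q - ∑ i, (c i : ℕ)) (fun i => (c i : ℕ)) j) with hμ
  have hsum : ∀ c : Fin n → Fin (q+1), (∑ i, (c i : ℕ)) ≤ n * q := by
    intro c
    calc ∑ i, (c i : ℕ) ≤ ∑ _i : Fin n, q := Finset.sum_le_sum fun i _ => Fin.is_le _
      _ = n * q := by simp [Finset.sum_const, Finset.card_univ]
  have hdeg : ∀ c, (μ c).degree = n * q := by
    intro c
    rw [degree_eq_sum_univ, hμ]
    simp only [Finsupp.coe_equivFunOnFinite_symm]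
    rw [Fin.sum_univ_succ]
    simp only [Fin.cases_zero, Fin.cases_succ]
    have := hsum c
    omega
  have hμinj : Function.Injective μ := by
    intro c c' h
    funext i
    have := DFunLike.congr_fun h i.succ
    rw [hμ] at this
    simp only [Finsupp.coe_equivFunOnFinite_symm, Fin.cases_succ] at this
    exact Fin.val_injective this
  set w : (Fin n → Fin (q+1)) → ↥(SS n (n*q)) := fun c =>
    ⟨monomial (μ c) 1, (mem_homogeneousSubmodule _ _).mpr
      (isHomogeneous_monomial 1 (hdeg c))⟩ with hw
  have hli : LinearIndependent ℂ w := by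
    have hcomp : ((SS n (n*q)).subtype) ∘ w = (fun s => monomial s (1:ℂ)) ∘ μ := rfl
    have hb : LinearIndependent ℂ (fun s : Fin (n+1) →₀ ℕ => monomial s (1:ℂ)) := by
      have := (basisMonomials (Fin (n+1)) ℂ).linearIndependent
      rwa [coe_basisMonomials] at this
    exact LinearIndependent.of_comp _ (by rw [hcomp]; exact hb.comp μ hμinj)
  have := hli.fintype_card_le_finrank
  simpa [Fintype.card_fun] using this

lemma keyNZ {n k : ℕ} (hn : 1 ≤ n) (hk : k ≤ n) (hk1 : 1 ≤ k)
    (f : Fin k → MvPolynomial (Fin (n+1)) ℂ) (dd : Fin k → ℕ)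
    (hhom : ∀ i, (f i).IsHomogeneous (dd i)) (hd1 : ∀ i, 1 ≤ dd i)
    (hne : ∀ i, f i ≠ 0) :
    ∃ v : Fin (n+1) → ℂ, v ≠ 0 ∧ ∀ i, eval v (f i) = 0 := by
  by_contra hcon
  push_neg at hcon
  set fe := fun i => if h : i < k then f ⟨i,h⟩ else 0 with hfedef
  set dde := fun i => if h : i < k then dd ⟨i,h⟩ else 1 with hddedef
  have hfeh : ∀ i < k, (fe i).IsHomogeneous (dde i) := by
    intro i hi
    simp only [hfedef, hddedef, dif_pos hi]
    exact hhom _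
  have hfene : ∀ i < k, fe i ≠ 0 := by
    intro i hi
    simp only [hfedef, dif_pos hi]
    exact hne _
  have hfed1 : ∀ i < k, 1 ≤ dde i := by
    intro i hi
    simp only [hddedef, dif_pos hi]
    exact hd1 _
  set I := Ideal.span (Set.range f) with hI
  have hrad : ∀ j : Fin (n+1), (X j : MvPolynomial (Fin (n+1)) ℂ) ∈ I.radical := by
    intro j
    rw [hI, ← vanishingIdeal_zeroLocus_eq_radical (K := ℂ), mem_vanishingIdeal_iff]
    intro y hy
    have hy0 : y = 0 := by
      by_contra hyy
      obtain ⟨i, hi⟩ := hcon y hyy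
      exact hi (hy (f i) (Ideal.subset_span (Set.mem_range_self i)))
    subst hy0
    simp
  choose Nj hNj using fun j => Ideal.mem_radical_iff.mp (hrad j)
  set N := (Finset.univ.sup Nj) + 1 with hN
  have hXN : ∀ j, (X j : MvPolynomial (Fin (n+1)) ℂ)^N ∈ I := by
    intro j
    have h1 : Nj j ≤ N := le_trans (Finset.le_sup (Finset.mem_univ j)) (Nat.le_succ _)
    have h2 : (X j : MvPolynomial (Fin (n+1)) ℂ)^N
        = (X j)^(Nj j) * (X j)^(N - Nj j) := by
      rw [← pow_add]
      congr 1
      omega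
    rw [h2]
    exact Ideal.mul_mem_right _ _ (hNj j)
  set M := (n+1) * N with hM
  have hSSI : ∀ m, M ≤ m → ∀ g ∈ SS n m, g ∈ I := by
    intro m hm g hgSS
    have hgh : g.IsHomogeneous m := (mem_homogeneousSubmodule _ _).mp hgSS
    rw [as_sum g]
    refine Ideal.sum_mem _ fun μ hμ => ?_
    have hdegμ : μ.degree = m := by
      rw [Finsupp.degree_eq_weight_one]
      exact hgh (mem_support_iff.mp hμ)
    have hbig : ∃ j, N ≤ μ j := by
      by_contra hsm
      push_neg at hsm
      have h1 : ∑ j : Fin (n+1), μ j ≤ ∑ _j : Fin (n+1), (N-1) :=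
        Finset.sum_le_sum fun j _ => by have := hsm j; omega
      have h2 : ∑ _j : Fin (n+1), (N-1) = (n+1)*(N-1) := by
        simp [Finset.sum_const, Finset.card_univ, Nat.mul_comm]
      rw [degree_eq_sum_univ] at hdegμ
      have hexp : (n+1) * N = (n+1)*(N-1) + (n+1) := by
        have hN1 : N - 1 + 1 = N := by omega
        calc (n+1) * N = (n+1) * ((N-1)+1) := by rw [hN1]
          _ = (n+1)*(N-1) + (n+1) := by ring
      omega
    obtain ⟨j, hj⟩ := hbig
    have hmono : (monomial μ) (coeff μ g)
        = (X j : MvPolynomial (Fin (n+1)) ℂ)^N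
          * (monomial (μ - Finsupp.single j N)) (coeff μ g) := by
      rw [X_pow_eq_monomial, monomial_mul, one_mul,
        add_tsub_cancel_of_le (Finsupp.single_le_iff.mpr hj)]
    rw [hmono]
    exact Ideal.mul_mem_right _ _ (hXN j)
  have hbbk0 : ∀ m, M ≤ m → bb n fe dde k m = 0 := by
    intro m hm
    have hEq : AA n fe dde k m = SS n m := by
      refine le_antisymm (AA_le_SS hfeh m) (fun g hgSS => ?_)
      exact span_homog_mem_AA f dd hhom (hSSI m hm g hgSS)
        ((mem_homogeneousSubmodule _ _).mp hgSS)
    unfold bb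
    rw [hEq, Nat.sub_self]
  set B := ∑ m' ∈ Finset.range M, bb n fe dde k m' with hB
  have hBd : ∀ m, bb n fe dde (k-1) m ≤ B := by
    intro m
    have hkk : k - 1 + 1 = k := by omega
    have h1 := bb_sum (i := k-1) (fe := fe) (dde := dde)
      (by rw [hkk]; exact hfeh) (hfene _ (by omega)) (hfed1 _ (by omega)) m
    rw [hkk] at h1
    set d := dde (k-1) with hd
    have hd0 : 1 ≤ d := hfed1 _ (by omega)
    set e : ℕ → ℕ := fun j => m - j * d with he
    have hinj : Set.InjOn e (Finset.range (m/d + 1)) := by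
      intro a ha b hb hab
      simp only [Finset.coe_range, Set.mem_Iio] at ha hb
      have ha' : a * d ≤ m := (Nat.le_div_iff_mul_le (by omega)).mp (by omega)
      have hb' : b * d ≤ m := (Nat.le_div_iff_mul_le (by omega)).mp (by omega)
      have hed : a * d = b * d := by
        simp only [he] at hab
        omega
      exact Nat.eq_of_mul_eq_mul_right (by omega) hed
    calc bb n fe dde (k-1) m
        ≤ ∑ j ∈ Finset.range (m/d + 1), bb n fe dde k (e j) := h1
      _ = ∑ m' ∈ (Finset.range (m/d + 1)).image e, bb n fe dde k m' :=
          (Finset.sum_image (fun a ha b hb hab => hinj ha hb hab)).symm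
      _ ≤ B := by
          rw [← Finset.sum_filter_add_sum_filter_not _ (fun m' => m' < M)]
          have hz : ∑ m' ∈ ((Finset.range (m/d + 1)).image e).filter (fun m' => ¬ m' < M),
              bb n fe dde k m' = 0 := by
            refine Finset.sum_eq_zero fun m' hm' => ?_
            exact hbbk0 m' (by have := (Finset.mem_filter.mp hm').2; omega)
          rw [hz, add_zero, hB]
          refine Finset.sum_le_sum_of_subset fun m' hm' => ?_
          exact Finset.mem_range.mpr (Finset.mem_filter.mp hm').2
  have hchain : ∀ t i, i + t = k - 1 → ∀ m, bb n fe dde i m ≤ B * (m+1)^t := by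
    intro t
    induction t with
    | zero =>
        intro i hi m
        obtain rfl : i = k - 1 := by omega
        simpa using hBd m
    | succ t iht =>
        intro i hi m
        have hik : i + 1 ≤ k := by omega
        have h1 := bb_sum (i := i) (fe := fe) (dde := dde)
          (fun i' hi' => hfeh i' (by omega)) (hfene _ (by omega)) (hfed1 _ (by omega)) m
        have h2 : ∀ j ∈ Finset.range (m / dde i + 1),
            bb n fe dde (i+1) (m - j * dde i) ≤ B * (m+1)^t := by
          intro j _
          calc bb n fe dde (i+1) (m - j * dde i)
              ≤ B * ((m - j * dde i) + 1)^t := iht (i+1) (by omega) _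
            _ ≤ B * (m+1)^t :=
              Nat.mul_le_mul_left _ (Nat.pow_le_pow_left (by omega) t)
        calc bb n fe dde i m
            ≤ ∑ j ∈ Finset.range (m / dde i + 1), bb n fe dde (i+1) (m - j * dde i) := h1
          _ ≤ (Finset.range (m / dde i + 1)).card * (B * (m+1)^t) := by
              rw [← smul_eq_mul]
              exact Finset.sum_le_card_nsmul _ _ _ h2
          _ ≤ (m+1) * (B * (m+1)^t) := by
              refine Nat.mul_le_mul_right _ ?_
              rw [Finset.card_range]
              have := Nat.div_le_self m (dde i)
              omega
          _ = B * (m+1)^(t+1) := by ring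
  have hfr : ∀ m, finrank ℂ (SS n m) ≤ B * (m+1)^(k-1) := by
    intro m
    have h0 := hchain (k-1) 0 (by omega) m
    unfold bb at h0
    rw [show AA n fe dde 0 m = ⊥ from rfl, finrank_bot, Nat.sub_zero] at h0
    exact h0
  set q := B * (n+1)^(n-1) with hq
  have hlow := finrank_SS_lb n q
  have hup := hfr (n*q)
  have h2 : B * (n*q+1)^(k-1) < (q+1)^n := by
    calc B * (n*q+1)^(k-1)
        ≤ B * ((n+1)*(q+1))^(k-1) :=
          Nat.mul_le_mul_left _ (Nat.pow_le_pow_left (by ring_nf; omega) _)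
      _ ≤ B * ((n+1)*(q+1))^(n-1) :=
          Nat.mul_le_mul_left _ (Nat.pow_le_pow_right (by positivity) (by omega))
      _ = (B * (n+1)^(n-1)) * (q+1)^(n-1) := by rw [mul_pow]; ring
      _ < (q+1) * (q+1)^(n-1) := by
          have : B * (n+1)^(n-1) < q + 1 := by omega
          exact Nat.mul_lt_mul_of_lt_of_le this le_rfl (by positivity)
      _ = (q+1)^n := by
          rw [← pow_succ']
          congr 1
          omega
  omega

lemma key {n k : ℕ} (hn : 1 ≤ n) (hk : k ≤ n)
    (f : Fin k → MvPolynomial (Fin (n+1)) ℂ) (dd : Fin k → ℕ)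
    (hhom : ∀ i, (f i).IsHomogeneous (dd i)) (hd1 : ∀ i, 1 ≤ dd i) :
    ∃ v : Fin (n+1) → ℂ, v ≠ 0 ∧ ∀ i, eval v (f i) = 0 := by
  rcases Nat.eq_zero_or_pos k with rfl | hk1
  · refine ⟨fun _ => 1, ?_, fun i => i.elim0⟩
    intro h
    simpa using congrFun h 0
  · set f' : Fin k → MvPolynomial (Fin (n+1)) ℂ :=
      fun i => if f i = 0 then (X 0)^(dd i) else f i with hf'
    have hhom' : ∀ i, (f' i).IsHomogeneous (dd i) := by
      intro i
      simp only [hf']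
      split_ifs with h
      · exact isHomogeneous_X_pow 0 (dd i)
      · exact hhom i
    have hne' : ∀ i, f' i ≠ 0 := by
      intro i
      simp only [hf']
      split_ifs with h
      · exact pow_ne_zero _ (X_ne_zero 0)
      · exact h
    obtain ⟨v, hv0, hv⟩ := keyNZ hn hk hk1 f' dd hhom' hd1 hne'
    refine ⟨v, hv0, fun i => ?_⟩
    rcases eq_or_ne (f i) 0 with h | h
    · rw [h, map_zero]
    · have := hv i
      simp only [hf', if_neg h] at this
      exact this

def Phi (n : ℕ) (x : Fin (n+1) → ℂ) :
    MvPolynomial (Fin (n+1)) ℂ →ₐ[ℂ] Polynomial (MvPolynomial (Fin (n+1)) ℂ) :=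
  aeval (fun i => Polynomial.C (MvPolynomial.C (x i))
    + Polynomial.C (MvPolynomial.X i) * Polynomial.X)

lemma Phi_coeff_homog (n : ℕ) (x : Fin (n+1) → ℂ) (F : MvPolynomial (Fin (n+1)) ℂ) :
    ∀ j, ((Phi n x F).coeff j).IsHomogeneous j := by
  induction F using MvPolynomial.induction_on with
  | C c =>
      intro j
      rw [Phi, aeval_C, Polynomial.algebraMap_apply, MvPolynomial.algebraMap_eq]
      cases j with
      | zero => simpa using isHomogeneous_C (Fin (n+1)) c
      | succ j =>
          rw [Polynomial.coeff_C]
          simpa using isHomogeneous_zero _ ℂ (j+1)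
  | add p q hp hq =>
      intro j
      rw [map_add, Polynomial.coeff_add]
      exact (hp j).add (hq j)
  | mul_X p i hp =>
      intro j
      rw [map_mul, Phi, aeval_X, ← Phi]
      rw [mul_add, Polynomial.coeff_add, ← mul_assoc]
      have h1 : ((Phi n x p * Polynomial.C (MvPolynomial.C (x i))).coeff j).IsHomogeneous j := by
        rw [Polynomial.coeff_mul_C]
        simpa using (hp j).mul (isHomogeneous_C _ _)
      have h2 : ((Phi n x p * Polynomial.C (MvPolynomial.X i) * Polynomial.X).coeff j).IsHomogeneous j := by
        cases j with
        | zero => simp [isHomogeneous_zero]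
        | succ j =>
            rw [Polynomial.coeff_mul_X, Polynomial.coeff_mul_C]
            exact (hp j).mul (isHomogeneous_X _ _)
      exact h1.add h2

lemma Phi_map_eval (n : ℕ) (x v : Fin (n+1) → ℂ) (F : MvPolynomial (Fin (n+1)) ℂ) :
    (Phi n x F).map (eval v)
      = aeval (fun i => Polynomial.C (x i) + Polynomial.C (v i) * Polynomial.X) F := by
  have hhom : (Polynomial.mapRingHom (eval v : MvPolynomial (Fin (n+1)) ℂ →+* ℂ)).comp
        ((Phi n x : MvPolynomial (Fin (n+1)) ℂ →ₐ[ℂ] _) :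
          MvPolynomial (Fin (n+1)) ℂ →+* Polynomial (MvPolynomial (Fin (n+1)) ℂ))
      = ((aeval (fun i => Polynomial.C (x i) + Polynomial.C (v i) * Polynomial.X) :
          MvPolynomial (Fin (n+1)) ℂ →ₐ[ℂ] Polynomial ℂ) :
          MvPolynomial (Fin (n+1)) ℂ →+* Polynomial ℂ) := by
    apply MvPolynomial.ringHom_ext
    · intro c
      simp [Phi, Polynomial.algebraMap_apply, MvPolynomial.algebraMap_eq]
    · intro i
      simp [Phi]
  exact RingHom.congr_fun hhom F

lemma eval_Phi_coeff (n : ℕ) (x v : Fin (n+1) → ℂ) (F : MvPolynomial (Fin (n+1)) ℂ) (j : ℕ) :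
    eval v ((Phi n x F).coeff j)
      = (aeval (fun i => Polynomial.C (x i) + Polynomial.C (v i) * Polynomial.X) F).coeff j := by
  rw [← Phi_map_eval n x v F, Polynomial.coeff_map]

lemma coeff_zero_eval (n : ℕ) (x v : Fin (n+1) → ℂ) (F : MvPolynomial (Fin (n+1)) ℂ) :
    (aeval (fun i => Polynomial.C (x i) + Polynomial.C (v i) * Polynomial.X) F).coeff 0
      = eval x F := by
  have hhom : (Polynomial.evalRingHom (0:ℂ)).comp
      ((aeval (fun i => Polynomial.C (x i) + Polynomial.C (v i) * Polynomial.X) :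
          MvPolynomial (Fin (n+1)) ℂ →ₐ[ℂ] Polynomial ℂ) :
          MvPolynomial (Fin (n+1)) ℂ →+* Polynomial ℂ)
      = (eval x : MvPolynomial (Fin (n+1)) ℂ →+* ℂ) := by
    apply MvPolynomial.ringHom_ext
    · intro c
      simp
    · intro i
      simp
  rw [Polynomial.coeff_zero_eq_eval_zero]
  exact RingHom.congr_fun hhom F


end OscAux

/-- surjectivity of `ρ_r : Δ̃_r → X` for `r ≤ n`: through every point of
every degree-`d` hypersurface in `ℙ^n` there passes a line having contact of order at
least `r` with the hypersurface at that point, provided `r ≤ n`. -/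
theorem exists_osculating_line_through_point
    (n d r : ℕ) (hn : 2 ≤ n) (hd : 1 ≤ d) (hr1 : 1 ≤ r) (hr2 : r ≤ n)
    (F : MvPolynomial (Fin (n + 1)) ℂ) (hF : F.IsHomogeneous d)
    (x : Fin (n + 1) → ℂ) (hx : x ≠ 0) (hFx : MvPolynomial.eval x F = 0) :
    ∃ v : Fin (n + 1) → ℂ, LinearIndependent ℂ ![x, v] ∧
      ∀ j < r,
        (MvPolynomial.aeval
          (fun i => Polynomial.C (x i) + Polynomial.C (v i) * Polynomial.X) F).coeff j = 0 := by
  have hn1 : 1 ≤ n := by omega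
  obtain ⟨i0, hi0⟩ : ∃ i0, x i0 ≠ 0 := by
    by_contra h
    push_neg at h
    exact hx (funext h)
  set g : Fin r → MvPolynomial (Fin (n+1)) ℂ :=
    fun i => if i.val = 0 then X i0 else (Phi n x F).coeff i.val with hg
  set dd : Fin r → ℕ := fun i => if i.val = 0 then 1 else i.val with hdd
  have hhomg : ∀ i, (g i).IsHomogeneous (dd i) := by
    intro i
    simp only [hg, hdd]
    split_ifs with h
    · exact isHomogeneous_X _ _
    · exact Phi_coeff_homog n x F i.val
  have hd1 : ∀ i, 1 ≤ dd i := by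
    intro i
    simp only [hdd]
    split_ifs with h
    · omega
    · omega
  obtain ⟨v, hv0, hveval⟩ := key hn1 hr2 g dd hhomg hd1
  have hvi0 : v i0 = 0 := by
    have h0 := hveval ⟨0, by omega⟩
    simp only [hg, if_pos rfl] at h0
    simpa using h0
  refine ⟨v, ?_, ?_⟩
  · rw [LinearIndependent.pair_iff]
    intro s t hst
    have h1 := congrFun hst i0
    simp only [Pi.add_apply, Pi.smul_apply, smul_eq_mul, Pi.zero_apply, hvi0,
      mul_zero, add_zero] at h1
    have hs : s = 0 := by
      rcases mul_eq_zero.mp h1 with h | h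
      · exact h
      · exact absurd h hi0
    subst hs
    refine ⟨rfl, ?_⟩
    have h2 : t • v = 0 := by
      have := hst
      rwa [zero_smul, zero_add] at this
    rcases smul_eq_zero.mp h2 with h | h
    · exact h
    · exact absurd h hv0
  · intro j hj
    rcases Nat.eq_zero_or_pos j with rfl | hjpos
    · rw [coeff_zero_eval]
      exact hFx
    · have hh := hveval ⟨j, hj⟩
      simp only [hg] at hh
      rw [if_neg (by simpa using Nat.pos_iff_ne_zero.mp hjpos)] at hh
      rw [← eval_Phi_coeff n x v F j]
      exact hh
end
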